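/- arXiv:1611.01493 — 4 statements merged into one kernel-verified Lean document; each statement's English description precedes it below -/
import Mathlib

section
/- Let H be a Hopf algebra and γ : H ⊗ H → K a 2-cocycle (convolution invertible, unital, satisfying γ(g₍₁₎⊗h₍₁₎)γ(g₍₂₎h₍₂₎⊗k) = γ(h₍₁₎⊗k₍₁₎)γ(g⊗h₍₂₎k₍₂₎)). Then the twisted product h ·_γ k := γ(h₍₁₎⊗k₍₁₎) h₍₂₎k₍₂₎ γ̄(h₍₃₎⊗k₍₃₎) is associative. -/
open TensorProduct LinearMap

noncomputable section

variable (R H : Type*) [CommRing R] [Ring H] [HopfAlgebra R H]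

/-- The multiplication of `H` as a linear map. -/
abbrev mulH : H ⊗[R] H →ₗ[R] H := LinearMap.mul' R H

/-- The antipode of `H`. -/
abbrev Sa : H →ₗ[R] H := HopfAlgebra.antipode (R := R)

/-- The comultiplication `h ⊗ k ↦ (h₍₁₎ ⊗ k₍₁₎) ⊗ (h₍₂₎ ⊗ k₍₂₎)` on `H ⊗ H`. -/
def comul2 : H ⊗[R] H →ₗ[R] (H ⊗[R] H) ⊗[R] (H ⊗[R] H) :=
  (tensorTensorTensorComm R H H H H).toLinearMap ∘ₗ map (Coalgebra.comul (R := R)) (Coalgebra.comul (R := R))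

/-- The (Coalgebra.counit (R := R)) `h ⊗ k ↦ ε(h)ε(k)` on `H ⊗ H`. -/
def counit2 : H ⊗[R] H →ₗ[R] R :=
  (TensorProduct.lid R R).toLinearMap ∘ₗ map (Coalgebra.counit (R := R)) (Coalgebra.counit (R := R))

/-- Iterated comultiplication `h ↦ (h₍₁₎ ⊗ h₍₂₎) ⊗ h₍₃₎`. -/
def comul3 : H →ₗ[R] (H ⊗[R] H) ⊗[R] H := map (Coalgebra.comul (R := R)) LinearMap.id ∘ₗ (Coalgebra.comul (R := R))

/-- Iterated comultiplication `h ↦ ((h₍₁₎ ⊗ h₍₂₎) ⊗ h₍₃₎) ⊗ h₍₄₎`. -/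
def comul4 : H →ₗ[R] ((H ⊗[R] H) ⊗[R] H) ⊗[R] H := map (comul3 R H) LinearMap.id ∘ₗ (Coalgebra.comul (R := R))

/-- Convolution product of two functionals with respect to a given comultiplication. -/
def convOn {C : Type*} [AddCommMonoid C] [Module R C]
    (Δc : C →ₗ[R] C ⊗[R] C) (f g : C →ₗ[R] R) : C →ₗ[R] R :=
  LinearMap.mul' R R ∘ₗ map f g ∘ₗ Δc

/-- The comultiplication on the triple tensor product `(H ⊗ H) ⊗ H`. -/
def comulC3 : (H ⊗[R] H) ⊗[R] H →ₗ[R] ((H ⊗[R] H) ⊗[R] H) ⊗[R] ((H ⊗[R] H) ⊗[R] H) :=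
  (tensorTensorTensorComm R (H ⊗[R] H) (H ⊗[R] H) H H).toLinearMap ∘ₗ map (comul2 R H) (Coalgebra.comul (R := R))

/-- `γ` is a 2-cocycle with convolution inverse `γ'` relative to the product `μ`:
convolution invertible, unital, and satisfying the 2-cocycle condition
`γ(g₍₁₎⊗h₍₁₎)γ(g₍₂₎h₍₂₎⊗k) = γ(h₍₁₎⊗k₍₁₎)γ(g⊗h₍₂₎k₍₂₎)`. -/
structure IsCocycle (μ : H ⊗[R] H →ₗ[R] H) (γ γ' : H ⊗[R] H →ₗ[R] R) : Prop where
  cocycle : convOn R (comulC3 R H) (LinearMap.mul' R R ∘ₗ map γ (Coalgebra.counit (R := R))) (γ ∘ₗ map μ LinearMap.id)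
    = convOn R (comulC3 R H)
        (LinearMap.mul' R R ∘ₗ map (Coalgebra.counit (R := R)) γ ∘ₗ (TensorProduct.assoc R H H H).toLinearMap)
        (γ ∘ₗ map LinearMap.id μ ∘ₗ (TensorProduct.assoc R H H H).toLinearMap)
  conv_inv_right : convOn R (comul2 R H) γ γ' = counit2 R H
  conv_inv_left : convOn R (comul2 R H) γ' γ = counit2 R H
  unital_right : ∀ h : H, γ (h ⊗ₜ[R] 1) = (Coalgebra.counit (R := R)) h
  unital_left : ∀ h : H, γ (1 ⊗ₜ[R] h) = (Coalgebra.counit (R := R)) h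

/-- The twisted product `h ·_γ k = γ(h₍₁₎⊗k₍₁₎) h₍₂₎∙k₍₂₎ γ'(h₍₃₎⊗k₍₃₎)`, where `∙` is
the (possibly already deformed) product `μ`. -/
def twistMul (μ : H ⊗[R] H →ₗ[R] H) (γ γ' : H ⊗[R] H →ₗ[R] R) : H ⊗[R] H →ₗ[R] H :=
  (TensorProduct.lid R H).toLinearMap ∘ₗ (TensorProduct.rid R (R ⊗[R] H)).toLinearMap
    ∘ₗ map (map γ μ) γ' ∘ₗ map (comul2 R H) LinearMap.id ∘ₗ comul2 R H

/-- `u_γ(h) = γ(h₍₁₎ ⊗ S(h₍₂₎))`. -/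
def uMap (γ : H ⊗[R] H →ₗ[R] R) : H →ₗ[R] R :=
  γ ∘ₗ map LinearMap.id (Sa R H) ∘ₗ (Coalgebra.comul (R := R))

/-- `ū_γ(h) = γ'(S(h₍₁₎) ⊗ h₍₂₎)`. -/
def ubarMap (γ' : H ⊗[R] H →ₗ[R] R) : H →ₗ[R] R :=
  γ' ∘ₗ map (Sa R H) LinearMap.id ∘ₗ (Coalgebra.comul (R := R))

/-- The twisted antipode `S_γ(h) = u_γ(h₍₁₎) S(h₍₂₎) ū_γ(h₍₃₎)`. -/
def Stw (γ γ' : H ⊗[R] H →ₗ[R] R) : H →ₗ[R] H :=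
  (TensorProduct.lid R H).toLinearMap ∘ₗ (TensorProduct.rid R (R ⊗[R] H)).toLinearMap
    ∘ₗ map (map (uMap R H γ) (Sa R H)) (ubarMap R H γ') ∘ₗ comul3 R H

/-- The (generalized) right adjoint coaction `h ↦ h₍₂₎ ⊗ S'(h₍₁₎) ∙ h₍₃₎`. -/
def AdGen (S' : H →ₗ[R] H) (μ : H ⊗[R] H →ₗ[R] H) : H →ₗ[R] H ⊗[R] H :=
  map LinearMap.id μ ∘ₗ (TensorProduct.assoc R H H H).toLinearMap
    ∘ₗ map ((TensorProduct.comm R H H).toLinearMap ∘ₗ map S' LinearMap.id) LinearMap.id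
    ∘ₗ comul3 R H

/-- The right adjoint coaction `Ad(h) = h₍₂₎ ⊗ S(h₍₁₎)h₍₃₎`. -/
def Ad : H →ₗ[R] H ⊗[R] H := AdGen R H (Sa R H) (mulH R H)

end


/-! Work in the convolution rings `WithConv (C →ₗ[R] H)`, where `ι s` denotes an `R`-valued
functional `s` followed by `algebraMap R H`; there the twisted product is `ι γ * μ * ι γ'`.
Since `R`-linear maps commute with such scalar factors and `map · id` splits convolution
products, `(g · h) · k` and `g · (h · k)` both become sandwiches `ι c * μ₃ * ι c⁻¹` on
`(H ⊗ H) ⊗ H`, with `μ₃` the triple product and `c` the left, resp. right, side of the cocycle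
condition read as a convolution product. The cocycle condition says that the two `c` agree,
hence so do their inverses. -/

open WithConv

theorem Units.map_inv_mul_map_inv_eq {M N F : Type*} [Monoid M] [Monoid N] [FunLike F M N]
    [MonoidHomClass F M N] (u : Mˣ) {f g h k : F} (hu : f u * g u = h u * k u) :
    g ↑u⁻¹ * f ↑u⁻¹ = k ↑u⁻¹ * h ↑u⁻¹ := by
  have e : Units.map (f : M →* N) u * Units.map (g : M →* N) u
      = Units.map (h : M →* N) u * Units.map (k : M →* N) u := Units.ext (by simpa using hu)
  simpa [mul_inv_rev] using congrArg (fun v : Nˣ => ((v⁻¹ : Nˣ) : N)) e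

namespace CoalgHom
variable {R A B C : Type*} [CommSemiring R] [Semiring A] [Algebra R A]
  [AddCommMonoid B] [Module R B] [Coalgebra R B] [AddCommMonoid C] [Module R C] [Coalgebra R C]

def precompConv (φ : B →ₗc[R] C) :
    WithConv (C →ₗ[R] A) →+* WithConv (B →ₗ[R] A) where
  toFun f := toConv (f.ofConv ∘ₗ φ.toLinearMap)
  map_one' := by ext; simp
  map_mul' f g := WithConv.ext (convMul_comp_coalgHom_distrib f g φ)
  map_zero' := by ext; simp
  map_add' f g := by ext; simp

@[simp] theorem ofConv_precompConv (φ : B →ₗc[R] C) (f : WithConv (C →ₗ[R] A)) :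
    (φ.precompConv f).ofConv = f.ofConv ∘ₗ φ.toLinearMap := rfl

end CoalgHom

namespace AlgHom
variable {R A B C : Type*} [CommSemiring R] [Semiring A] [Algebra R A] [Semiring B] [Algebra R B]
  [AddCommMonoid C] [Module R C] [Coalgebra R C]

def postcompConv (f : A →ₐ[R] B) : WithConv (C →ₗ[R] A) →+* WithConv (C →ₗ[R] B) where
  toFun g := toConv (f.toLinearMap ∘ₗ g.ofConv)
  map_one' := by ext; simp
  map_mul' g h := WithConv.ext (algHom_comp_convMul_distrib f g h)
  map_zero' := by ext; simp
  map_add' g h := by ext; simp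

@[simp] theorem ofConv_postcompConv (f : A →ₐ[R] B) (g : WithConv (C →ₗ[R] A)) :
    (f.postcompConv g).ofConv = f.toLinearMap ∘ₗ g.ofConv := rfl

end AlgHom

local notation "ι" => AlgHom.postcompConv (Algebra.ofId _ _)

section Scalar
variable {R A B C : Type*} [CommSemiring R] [Semiring A] [Algebra R A] [Semiring B] [Algebra R B]
  [AddCommMonoid C] [Module R C] [Coalgebra R C]

theorem comp_scalar_convMul (T : A →ₗ[R] B) (s : WithConv (C →ₗ[R] R))
    (F : WithConv (C →ₗ[R] A)) :
    toConv (T ∘ₗ (ι s * F).ofConv) = ι s * toConv (T ∘ₗ F.ofConv) := by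
  have key : T ∘ₗ mul' R A ∘ₗ map ((Algebra.ofId R A).toLinearMap ∘ₗ s.ofConv) F.ofConv
      = mul' R B ∘ₗ map ((Algebra.ofId R B).toLinearMap ∘ₗ s.ofConv)
          (T ∘ₗ F.ofConv) := by
    ext x y; simp [Algebra.algebraMap_eq_smul_one]
  apply WithConv.ext
  simp only [LinearMap.convMul_def, AlgHom.ofConv_postcompConv, ← comp_assoc] at key ⊢
  rw [key]

theorem comp_convMul_scalar (T : A →ₗ[R] B) (F : WithConv (C →ₗ[R] A))
    (t : WithConv (C →ₗ[R] R)) :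
    toConv (T ∘ₗ (F * ι t).ofConv) = toConv (T ∘ₗ F.ofConv) * ι t := by
  have key : T ∘ₗ mul' R A ∘ₗ map F.ofConv ((Algebra.ofId R A).toLinearMap ∘ₗ t.ofConv)
      = mul' R B ∘ₗ map (T ∘ₗ F.ofConv)
          ((Algebra.ofId R B).toLinearMap ∘ₗ t.ofConv) := by
    ext x y; simp [Algebra.algebraMap_eq_smul_one]
  apply WithConv.ext
  simp only [LinearMap.convMul_def, AlgHom.ofConv_postcompConv, ← comp_assoc] at key ⊢
  rw [key]

theorem comp_scalar_convMul_scalar (T : A →ₗ[R] B) (s : WithConv (C →ₗ[R] R))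
    (F : WithConv (C →ₗ[R] A)) (t : WithConv (C →ₗ[R] R)) :
    toConv (T ∘ₗ (ι s * F * ι t).ofConv) = ι s * toConv (T ∘ₗ F.ofConv) * ι t := by
  rw [comp_convMul_scalar, comp_scalar_convMul]

end Scalar

namespace Coalgebra.TensorProduct
variable (R C D : Type*) [CommSemiring R] [AddCommMonoid C] [Module R C] [Coalgebra R C]
  [AddCommMonoid D] [Module R D] [Coalgebra R D]

noncomputable def projLeft : C ⊗[R] D →ₗc[R] C :=
  (Coalgebra.TensorProduct.rid R R C).toCoalgHom.comp
    (Coalgebra.TensorProduct.map (CoalgHom.id R C) (counitCoalgHom R D))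

noncomputable def projRight : C ⊗[R] D →ₗc[R] D :=
  (Coalgebra.TensorProduct.lid R D).toCoalgHom.comp
    (Coalgebra.TensorProduct.map (counitCoalgHom R C) (CoalgHom.id R D))

@[simp] theorem projLeft_tmul (c : C) (d : D) :
    projLeft R C D (c ⊗ₜ d) = counit (R := R) d • c := rfl

@[simp] theorem projRight_tmul (c : C) (d : D) :
    projRight R C D (c ⊗ₜ d) = counit (R := R) c • d := rfl

end Coalgebra.TensorProduct

section TensorMap
variable {R A B C D : Type*} [CommSemiring R] [Semiring A] [Algebra R A] [Semiring B] [Algebra R B]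
  [AddCommMonoid C] [Module R C] [Coalgebra R C] [AddCommMonoid D] [Module R D] [Coalgebra R D]

theorem toConv_map_mul_mul_left (a F c : WithConv (C →ₗ[R] A)) (G : WithConv (D →ₗ[R] B)) :
    toConv (map (a * F * c).ofConv G.ofConv)
      = toConv (map a.ofConv (1 : WithConv (D →ₗ[R] B)).ofConv) * toConv (map F.ofConv G.ofConv)
        * toConv (map c.ofConv (1 : WithConv (D →ₗ[R] B)).ofConv) := by
  rw [map_convMul_map, map_convMul_map, one_mul, mul_one]

theorem toConv_map_mul_mul_right (G : WithConv (C →ₗ[R] A)) (a F c : WithConv (D →ₗ[R] B)) :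
    toConv (map G.ofConv (a * F * c).ofConv)
      = toConv (map (1 : WithConv (C →ₗ[R] A)).ofConv a.ofConv) * toConv (map G.ofConv F.ofConv)
        * toConv (map (1 : WithConv (C →ₗ[R] A)).ofConv c.ofConv) := by
  rw [map_convMul_map, map_convMul_map, one_mul, mul_one]

theorem toConv_map_scalar_one (s : WithConv (C →ₗ[R] R)) :
    toConv (map (ι s : WithConv (C →ₗ[R] A)).ofConv (1 : WithConv (D →ₗ[R] B)).ofConv)
      = ι ((Coalgebra.TensorProduct.projLeft R C D).precompConv s) := by
  ext c d
  simp [Algebra.algebraMap_eq_smul_one, ← smul_tmul', smul_smul, mul_comm,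
    Algebra.TensorProduct.one_def]

theorem toConv_map_one_scalar (s : WithConv (D →ₗ[R] R)) :
    toConv (map (1 : WithConv (C →ₗ[R] A)).ofConv (ι s : WithConv (D →ₗ[R] B)).ofConv)
      = ι ((Coalgebra.TensorProduct.projRight R C D).precompConv s) := by
  ext c d
  simp [Algebra.algebraMap_eq_smul_one, ← smul_tmul', smul_smul, mul_comm,
    Algebra.TensorProduct.one_def]

end TensorMap

section Twist
open Coalgebra.TensorProduct (projLeft projRight)
variable {R H : Type*} [CommRing R] [Ring H] [HopfAlgebra R H]

local notation "α" => CoalgEquiv.toCoalgHom (Coalgebra.TensorProduct.assoc R R H H H)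

theorem toConv_twistMul (μ : H ⊗[R] H →ₗ[R] H) (γ γ' : H ⊗[R] H →ₗ[R] R) :
    toConv (twistMul R H μ γ γ') = ι (toConv γ) * toConv μ * ι (toConv γ') := by
  have key : (TensorProduct.lid R H).toLinearMap
        ∘ₗ (TensorProduct.rid R (R ⊗[R] H)).toLinearMap ∘ₗ map (map γ μ) γ'
      = mul' R H ∘ₗ map (mul' R H) LinearMap.id
        ∘ₗ map (map ((Algebra.ofId R H).toLinearMap ∘ₗ γ) μ)
          ((Algebra.ofId R H).toLinearMap ∘ₗ γ') := by
    ext a b c d e f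
    simp [Algebra.algebraMap_eq_smul_one, smul_smul, mul_comm]
  have hΔ : comul2 R H = Coalgebra.comul := rfl
  apply WithConv.ext
  simp only [twistMul, hΔ, LinearMap.convMul_def, AlgHom.ofConv_postcompConv,
    ← comp_assoc] at key ⊢
  rw [key]
  simp only [comp_assoc, ← map_comp, id_comp]
  rfl

theorem toConv_counit2 : toConv (counit2 R H) = 1 := by
  ext; simp [counit2, mul_comm]

variable (μ : H ⊗[R] H →ₗc[R] H) (γ γ' : H ⊗[R] H →ₗ[R] R)

theorem toConv_twistMul_comp_coalgHom {B : Type*} [AddCommGroup B] [Module R B] [Coalgebra R B]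
    (φ : B →ₗc[R] H ⊗[R] H) :
    toConv (twistMul R H μ γ γ' ∘ₗ φ.toLinearMap)
      = ι (φ.precompConv (toConv γ)) * toConv (μ.toLinearMap ∘ₗ φ.toLinearMap)
        * ι (φ.precompConv (toConv γ')) := by
  change φ.precompConv (toConv (twistMul R H μ γ γ')) = _
  rw [toConv_twistMul, map_mul, map_mul]
  rfl

theorem toConv_twistMul_comp_map_twistMul_id :
    toConv (twistMul R H μ γ γ' ∘ₗ map (twistMul R H μ γ γ') LinearMap.id)
      = ι ((projLeft R _ H).precompConv (toConv γ)
          * (Coalgebra.TensorProduct.map μ (CoalgHom.id R H)).precompConv (toConv γ))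
        * toConv (μ.toLinearMap ∘ₗ map μ.toLinearMap LinearMap.id)
        * ι ((Coalgebra.TensorProduct.map μ (CoalgHom.id R H)).precompConv (toConv γ')
          * (projLeft R _ H).precompConv (toConv γ')) := by
  have hmap : toConv (map (twistMul R H μ γ γ') LinearMap.id)
      = ι ((projLeft R _ H).precompConv (toConv γ))
        * toConv (Coalgebra.TensorProduct.map μ (CoalgHom.id R H)).toLinearMap
        * ι ((projLeft R _ H).precompConv (toConv γ')) := by
    have h := toConv_map_mul_mul_left (ι (toConv γ)) (toConv μ.toLinearMap) (ι (toConv γ'))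
      (toConv (LinearMap.id : H →ₗ[R] H))
    rwa [← toConv_twistMul, toConv_map_scalar_one, toConv_map_scalar_one] at h
  calc _ = toConv (twistMul R H μ γ γ'
          ∘ₗ (toConv (map (twistMul R H μ γ γ') LinearMap.id)).ofConv) := rfl
    _ = _ := by
      rw [hmap, comp_scalar_convMul_scalar, toConv_twistMul_comp_coalgHom]
      simp only [map_mul, mul_assoc]
      rfl

theorem toConv_twistMul_comp_map_id_twistMul_comp_assoc :
    toConv (twistMul R H μ γ γ' ∘ₗ map LinearMap.id (twistMul R H μ γ γ')
        ∘ₗ (TensorProduct.assoc R H H H).toLinearMap)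
      = ι (((projRight R H _).comp α).precompConv (toConv γ)
          * ((Coalgebra.TensorProduct.map (CoalgHom.id R H) μ).comp α).precompConv (toConv γ))
        * toConv (μ.toLinearMap ∘ₗ map LinearMap.id μ.toLinearMap
          ∘ₗ (TensorProduct.assoc R H H H).toLinearMap)
        * ι (((Coalgebra.TensorProduct.map (CoalgHom.id R H) μ).comp α).precompConv (toConv γ')
          * ((projRight R H _).comp α).precompConv (toConv γ')) := by
  have hmap : toConv (map LinearMap.id (twistMul R H μ γ γ'))
      = ι ((projRight R H _).precompConv (toConv γ))
        * toConv (Coalgebra.TensorProduct.map (CoalgHom.id R H) μ).toLinearMap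
        * ι ((projRight R H _).precompConv (toConv γ')) := by
    have h := toConv_map_mul_mul_right (toConv (LinearMap.id : H →ₗ[R] H)) (ι (toConv γ))
      (toConv μ.toLinearMap) (ι (toConv γ'))
    rwa [← toConv_twistMul, toConv_map_one_scalar, toConv_map_one_scalar] at h
  calc _ = CoalgHom.precompConv α (toConv (twistMul R H μ γ γ'
          ∘ₗ (toConv (map LinearMap.id (twistMul R H μ γ γ'))).ofConv)) := rfl
    _ = _ := by
      rw [hmap, comp_scalar_convMul_scalar, toConv_twistMul_comp_coalgHom]
      simp only [map_mul, mul_assoc]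
      rfl

theorem IsCocycle.cocycle_convMul (hco : IsCocycle R H μ.toLinearMap γ γ') :
    (projLeft R _ H).precompConv (toConv γ)
        * (Coalgebra.TensorProduct.map μ (CoalgHom.id R H)).precompConv (toConv γ)
      = ((projRight R H _).comp α).precompConv (toConv γ)
        * ((Coalgebra.TensorProduct.map (CoalgHom.id R H) μ).comp α).precompConv (toConv γ) := by
  have hL : mul' R R ∘ₗ map γ Coalgebra.counit
      = ((projLeft R _ H).precompConv (toConv γ)).ofConv := by
    ext; simp [mul_comm]
  have hR : mul' R R ∘ₗ map Coalgebra.counit γ ∘ₗ (TensorProduct.assoc R H H H).toLinearMap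
      = (((projRight R H _).comp α).precompConv (toConv γ)).ofConv := by
    ext; simp
  have h := hco.cocycle
  rw [hL, hR] at h
  exact WithConv.ext h

def IsCocycle.convUnit (hco : IsCocycle R H μ.toLinearMap γ γ') :
    (WithConv (H ⊗[R] H →ₗ[R] R))ˣ where
  val := toConv γ
  inv := toConv γ'
  val_inv := (WithConv.ext hco.conv_inv_right).trans toConv_counit2
  inv_val := (WithConv.ext hco.conv_inv_left).trans toConv_counit2

theorem twistMul_assoc_of_coalgHom
    (hμ : μ.toLinearMap ∘ₗ map μ.toLinearMap LinearMap.id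
      = μ.toLinearMap ∘ₗ map LinearMap.id μ.toLinearMap
        ∘ₗ (TensorProduct.assoc R H H H).toLinearMap)
    (hco : IsCocycle R H μ.toLinearMap γ γ') :
    twistMul R H μ γ γ' ∘ₗ map (twistMul R H μ γ γ') LinearMap.id
      = twistMul R H μ γ γ' ∘ₗ map LinearMap.id (twistMul R H μ γ γ')
        ∘ₗ (TensorProduct.assoc R H H H).toLinearMap := by
  have hinv := Units.map_inv_mul_map_inv_eq hco.convUnit hco.cocycle_convMul
  apply WithConv.toConv_injective
  rw [toConv_twistMul_comp_map_twistMul_id, toConv_twistMul_comp_map_id_twistMul_comp_assoc, hμ,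
    hco.cocycle_convMul]
  exact congrArg (fun p => _ * ι p) hinv

end Twist

/-- the twisted product `h ·_γ k = γ(h₍₁₎⊗k₍₁₎) h₍₂₎k₍₂₎ γ̄(h₍₃₎⊗k₍₃₎)`
of a 2-cocycle `γ` (with convolution inverse `γ'`) is associative. -/
theorem twistMul_assoc (R H : Type*) [CommRing R] [Ring H] [HopfAlgebra R H]
    (γ γ' : H ⊗[R] H →ₗ[R] R) (hco : IsCocycle R H (mulH R H) γ γ') :
    twistMul R H (mulH R H) γ γ' ∘ₗ map (twistMul R H (mulH R H) γ γ') LinearMap.id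
      = twistMul R H (mulH R H) γ γ' ∘ₗ map LinearMap.id (twistMul R H (mulH R H) γ γ') ∘ₗ (TensorProduct.assoc R H H H).toLinearMap := by
  refine twistMul_assoc_of_coalgHom (Bialgebra.mulCoalgHom R H) γ γ' ?_ hco
  ext a b c
  simp [mul_assoc]
end

section
/- Let H be a Hopf algebra and γ a 2-cocycle on H. The coproduct Δ of H is an algebra homomorphism from the twisted algebra H_γ (with product ·_γ) to H_γ ⊗ H_γ equipped with the product (h⊗k)(h'⊗k') = (h ·_γ h') ⊗ (k ·_γ k'). Equivalently, Δ(h ·_γ k) = (h₍₁₎ ·_γ k₍₁₎) ⊗ (h₍₂₎ ·_γ k₍₂₎). -/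
open TensorProduct LinearMap

/-! ### Auxiliary lemmas for STATEMENT 3 -/

noncomputable section Helpers3

variable (R H : Type*) [CommRing R] [Ring H] [HopfAlgebra R H]

open Coalgebra

lemma aux1 :
    map (comul2 R H) LinearMap.id ∘ₗ (tensorTensorTensorComm R H H H H).toLinearMap
      = map (tensorTensorTensorComm R H H H H).toLinearMap LinearMap.id
          ∘ₗ (tensorTensorTensorComm R (H ⊗[R] H) H (H ⊗[R] H) H).toLinearMap
          ∘ₗ map (map (comul (R := R)) LinearMap.id) (map (comul (R := R)) LinearMap.id) := by
  ext a b c d; simp [comul2]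

lemma aux2 :
    map LinearMap.id (comul2 R H) ∘ₗ (tensorTensorTensorComm R H H H H).toLinearMap
      = map LinearMap.id (tensorTensorTensorComm R H H H H).toLinearMap
          ∘ₗ (tensorTensorTensorComm R H (H ⊗[R] H) H (H ⊗[R] H)).toLinearMap
          ∘ₗ map (map LinearMap.id (comul (R := R))) (map LinearMap.id (comul (R := R))) := by
  ext a b c d; simp [comul2]

lemma aux3 :
    map (tensorTensorTensorComm R H H H H).toLinearMap LinearMap.id
        ∘ₗ (tensorTensorTensorComm R (H ⊗[R] H) H (H ⊗[R] H) H).toLinearMap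
      = (TensorProduct.assoc R (H ⊗[R] H) (H ⊗[R] H) (H ⊗[R] H)).symm.toLinearMap
          ∘ₗ map LinearMap.id (tensorTensorTensorComm R H H H H).toLinearMap
          ∘ₗ (tensorTensorTensorComm R H (H ⊗[R] H) H (H ⊗[R] H)).toLinearMap
          ∘ₗ map (TensorProduct.assoc R H H H).toLinearMap (TensorProduct.assoc R H H H).toLinearMap := by
  ext a b c x y z; simp

lemma comul2_coassoc :
    map (comul2 R H) LinearMap.id ∘ₗ comul2 R H
      = (TensorProduct.assoc R (H ⊗[R] H) (H ⊗[R] H) (H ⊗[R] H)).symm.toLinearMap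
          ∘ₗ map LinearMap.id (comul2 R H) ∘ₗ comul2 R H := by
  apply TensorProduct.ext'
  intro h k
  have e1 := LinearMap.congr_fun (aux1 R H) ((comul (R := R) h) ⊗ₜ[R] (comul (R := R) k))
  have e2 := LinearMap.congr_fun (aux2 R H) ((comul (R := R) h) ⊗ₜ[R] (comul (R := R) k))
  have e3 := LinearMap.congr_fun (aux3 R H)
    ((map (comul (R := R)) LinearMap.id (comul (R := R) h)) ⊗ₜ[R]
      (map (comul (R := R)) LinearMap.id (comul (R := R) k)))
  have c1 : map LinearMap.id (comul (R := R)) (comul (R := R) h)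
      = TensorProduct.assoc R H H H (map (comul (R := R)) LinearMap.id (comul (R := R) h)) := by
    simpa [LinearMap.rTensor, LinearMap.lTensor] using (Coalgebra.coassoc_apply (R := R) h).symm
  have c2 : map LinearMap.id (comul (R := R)) (comul (R := R) k)
      = TensorProduct.assoc R H H H (map (comul (R := R)) LinearMap.id (comul (R := R) k)) := by
    simpa [LinearMap.rTensor, LinearMap.lTensor] using (Coalgebra.coassoc_apply (R := R) k).symm
  simp only [comul2, coe_comp, LinearEquiv.coe_coe, Function.comp_apply, map_tmul, id_coe, id_eq] at *
  rw [e1, e2, c1, c2, e3]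

lemma aux4 :
    map (counit2 R H) LinearMap.id ∘ₗ (tensorTensorTensorComm R H H H H).toLinearMap
      = map (TensorProduct.lid R R).toLinearMap LinearMap.id
          ∘ₗ (tensorTensorTensorComm R R H R H).toLinearMap
          ∘ₗ map (map (counit (R := R)) LinearMap.id) (map (counit (R := R)) LinearMap.id) := by
  ext a b c d; simp [counit2]

lemma counit2_comul2 :
    map (counit2 R H) LinearMap.id ∘ₗ comul2 R H
      = (TensorProduct.lid R (H ⊗[R] H)).symm.toLinearMap := by
  apply TensorProduct.ext'
  intro h k
  have e1 := LinearMap.congr_fun (aux4 R H) ((comul (R := R) h) ⊗ₜ[R] (comul (R := R) k))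
  have c1 : map (counit (R := R)) LinearMap.id (comul (R := R) h) = (1 : R) ⊗ₜ[R] h := by
    simpa [LinearMap.rTensor] using Coalgebra.rTensor_counit_comul (R := R) h
  have c2 : map (counit (R := R)) LinearMap.id (comul (R := R) k) = (1 : R) ⊗ₜ[R] k := by
    simpa [LinearMap.rTensor] using Coalgebra.rTensor_counit_comul (R := R) k
  simp only [comul2, coe_comp, LinearEquiv.coe_coe, Function.comp_apply, map_tmul, id_coe, id_eq] at *
  rw [e1, c1, c2]
  simp

/-- Convolution with values in an `R`-algebra `B`. -/
def convB (B : Type*) [Ring B] [Algebra R B] (f g : H ⊗[R] H →ₗ[R] B) : H ⊗[R] H →ₗ[R] B :=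
  LinearMap.mul' R B ∘ₗ map f g ∘ₗ comul2 R H

lemma convB_eq_convOn (f g : H ⊗[R] H →ₗ[R] R) :
    convB R H R f g = convOn R (comul2 R H) f g := rfl

variable {R H} in
lemma convB_assoc (B : Type*) [Ring B] [Algebra R B] (f g h : H ⊗[R] H →ₗ[R] B) :
    convB R H B (convB R H B f g) h = convB R H B f (convB R H B g h) := by
  unfold convB
  rw [show map (mul' R B ∘ₗ map f g ∘ₗ comul2 R H) h
      = (map (mul' R B) LinearMap.id) ∘ₗ map (map f g) h ∘ₗ map (comul2 R H) LinearMap.id by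
    ext; simp]
  rw [show map f (mul' R B ∘ₗ map g h ∘ₗ comul2 R H)
      = (map LinearMap.id (mul' R B)) ∘ₗ map f (map g h) ∘ₗ map LinearMap.id (comul2 R H) by
    ext; simp]
  simp only [LinearMap.comp_assoc]
  rw [comul2_coassoc]
  simp only [← LinearMap.comp_assoc]
  congr 1
  congr 1
  ext x y z
  simp [mul_assoc]

variable {R H} in
lemma convB_unit_left (B : Type*) [Ring B] [Algebra R B] (f : H ⊗[R] H →ₗ[R] B) :
    convB R H B ((Algebra.linearMap R B) ∘ₗ counit2 R H) f = f := by
  unfold convB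
  rw [show map ((Algebra.linearMap R B) ∘ₗ counit2 R H) f
      = map (Algebra.linearMap R B) f ∘ₗ map (counit2 R H) LinearMap.id by
    ext; simp]
  simp only [LinearMap.comp_assoc]
  rw [counit2_comul2]
  apply LinearMap.ext; intro x
  simp

variable {R H} in
lemma comp_convB {B B' : Type*} [Ring B] [Algebra R B] [Ring B'] [Algebra R B']
    (phi : B →ₐ[R] B') (f g : H ⊗[R] H →ₗ[R] B) :
    phi.toLinearMap ∘ₗ convB R H B f g
      = convB R H B' (phi.toLinearMap ∘ₗ f) (phi.toLinearMap ∘ₗ g) := by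
  unfold convB
  rw [show map (phi.toLinearMap ∘ₗ f) (phi.toLinearMap ∘ₗ g)
      = map phi.toLinearMap phi.toLinearMap ∘ₗ map f g from by rw [← TensorProduct.map_comp]]
  simp only [← LinearMap.comp_assoc]
  congr 2
  ext x y
  simp

def iL : H →ₗ[R] (H ⊗[R] H) := (Algebra.TensorProduct.includeLeft : H →ₐ[R] H ⊗[R] H).toLinearMap
def iR : H →ₗ[R] (H ⊗[R] H) := (Algebra.TensorProduct.includeRight : H →ₐ[R] H ⊗[R] H).toLinearMap

lemma comul_mulH : (comul (R := R) (A := H)) ∘ₗ mulH R H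
    = mul' R (H ⊗[R] H) ∘ₗ map (comul (R := R)) (comul (R := R)) := by
  ext h k; simp

lemma mulA_eq : mul' R (H ⊗[R] H)
    = map (mulH R H) (mulH R H) ∘ₗ (tensorTensorTensorComm R H H H H).toLinearMap := by
  ext a b c d; simp [iL, iR, Algebra.TensorProduct.tmul_mul_tmul]

lemma incl_mul : mul' R (H ⊗[R] H) ∘ₗ map (iL R H) (iR R H) = LinearMap.id := by
  ext h k; simp [iL, iR, Algebra.TensorProduct.tmul_mul_tmul]

lemma comul_mulH_conv : (comul (R := R) (A := H)) ∘ₗ mulH R H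
    = convB R H (H ⊗[R] H) (iL R H ∘ₗ mulH R H) (iR R H ∘ₗ mulH R H) := by
  unfold convB
  rw [show map (iL R H ∘ₗ mulH R H) (iR R H ∘ₗ mulH R H)
      = map (iL R H) (iR R H) ∘ₗ map (mulH R H) (mulH R H) from by rw [← TensorProduct.map_comp]]
  simp only [← LinearMap.comp_assoc]
  rw [incl_mul, id_comp, comul_mulH, mulA_eq]
  simp only [comul2, ← LinearMap.comp_assoc]

variable {R H} in
lemma mapTT_conv (T : H ⊗[R] H →ₗ[R] H) :
    map T T ∘ₗ comul2 R H = convB R H (H ⊗[R] H) (iL R H ∘ₗ T) (iR R H ∘ₗ T) := by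
  unfold convB
  rw [show map (iL R H ∘ₗ T) (iR R H ∘ₗ T)
      = map (iL R H) (iR R H) ∘ₗ map T T from by rw [← TensorProduct.map_comp]]
  simp only [← LinearMap.comp_assoc]
  rw [incl_mul, id_comp]

variable {R H} in
lemma twistMul_eq (γ γ' : H ⊗[R] H →ₗ[R] R) :
    twistMul R H (mulH R H) γ γ'
      = convB R H H (convB R H H (Algebra.linearMap R H ∘ₗ γ) (mulH R H))
          (Algebra.linearMap R H ∘ₗ γ') := by
  unfold twistMul convB
  rw [show map (mul' R H ∘ₗ map (Algebra.linearMap R H ∘ₗ γ) (mulH R H) ∘ₗ comul2 R H)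
        (Algebra.linearMap R H ∘ₗ γ')
      = map (mul' R H ∘ₗ map (Algebra.linearMap R H ∘ₗ γ) (mulH R H)) (Algebra.linearMap R H ∘ₗ γ')
          ∘ₗ map (comul2 R H) LinearMap.id from by ext; simp]
  simp only [← LinearMap.comp_assoc]
  congr 2
  ext a b c d e f
  simp [Algebra.algebraMap_eq_smul_one, smul_mul_assoc, mul_smul_comm, smul_smul, mul_assoc]

lemma comul_etaH :
    (comul (R := R) (A := H)) ∘ₗ Algebra.linearMap R H = Algebra.linearMap R (H ⊗[R] H) := by
  ext; simp [Algebra.TensorProduct.one_def]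

lemma iL_etaH : iL R H ∘ₗ Algebra.linearMap R H = Algebra.linearMap R (H ⊗[R] H) := by
  ext; simp [iL]

lemma iR_etaH : iR R H ∘ₗ Algebra.linearMap R H = Algebra.linearMap R (H ⊗[R] H) := by
  ext; simp [iR]

variable {R H} in
lemma conv_eta (f g : H ⊗[R] H →ₗ[R] R) :
    convB R H (H ⊗[R] H) (Algebra.linearMap R (H ⊗[R] H) ∘ₗ f) (Algebra.linearMap R (H ⊗[R] H) ∘ₗ g)
      = Algebra.linearMap R (H ⊗[R] H) ∘ₗ convB R H R f g := by
  unfold convB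
  rw [show map (Algebra.linearMap R (H ⊗[R] H) ∘ₗ f) (Algebra.linearMap R (H ⊗[R] H) ∘ₗ g)
      = map (Algebra.linearMap R (H ⊗[R] H)) (Algebra.linearMap R (H ⊗[R] H)) ∘ₗ map f g from by
    rw [← TensorProduct.map_comp]]
  simp only [← LinearMap.comp_assoc]
  congr 2
  ext
  simp [← map_mul]

variable {R H} in
lemma iL_convB (f g : H ⊗[R] H →ₗ[R] H) :
    iL R H ∘ₗ convB R H H f g = convB R H (H ⊗[R] H) (iL R H ∘ₗ f) (iL R H ∘ₗ g) :=
  comp_convB (Algebra.TensorProduct.includeLeft : H →ₐ[R] H ⊗[R] H) f g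

variable {R H} in
lemma iR_convB (f g : H ⊗[R] H →ₗ[R] H) :
    iR R H ∘ₗ convB R H H f g = convB R H (H ⊗[R] H) (iR R H ∘ₗ f) (iR R H ∘ₗ g) :=
  comp_convB (Algebra.TensorProduct.includeRight : H →ₐ[R] H ⊗[R] H) f g

variable {R H} in
lemma comul_convB (f g : H ⊗[R] H →ₗ[R] H) :
    (comul (R := R) (A := H)) ∘ₗ convB R H H f g
      = convB R H (H ⊗[R] H) ((comul (R := R)) ∘ₗ f) ((comul (R := R)) ∘ₗ g) :=
  comp_convB (Bialgebra.comulAlgHom R H) f g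

end Helpers3

/-- the coproduct is an algebra map for the twisted products:
`Δ(h ·_γ k) = (h₍₁₎ ·_γ k₍₁₎) ⊗ (h₍₂₎ ·_γ k₍₂₎)`. -/
theorem comul_twistMul (R H : Type*) [CommRing R] [Ring H] [HopfAlgebra R H]
    (γ γ' : H ⊗[R] H →ₗ[R] R) (hco : IsCocycle R H (mulH R H) γ γ') :
    (Coalgebra.comul (R := R)) ∘ₗ twistMul R H (mulH R H) γ γ' = map (twistMul R H (mulH R H) γ γ') (twistMul R H (mulH R H) γ γ') ∘ₗ comul2 R H := by
  have hinv : convB R H (H ⊗[R] H) (Algebra.linearMap R (H ⊗[R] H) ∘ₗ γ')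
      (Algebra.linearMap R (H ⊗[R] H) ∘ₗ γ)
      = Algebra.linearMap R (H ⊗[R] H) ∘ₗ counit2 R H := by
    rw [conv_eta, convB_eq_convOn, hco.conv_inv_left]
  rw [twistMul_eq γ γ', mapTT_conv, comul_convB, comul_convB,
      iL_convB, iL_convB, iR_convB, iR_convB]
  simp only [← LinearMap.comp_assoc, comul_etaH, iL_etaH, iR_etaH]
  rw [comul_mulH_conv]
  simp only [convB_assoc]
  rw [← convB_assoc (H ⊗[R] H) ((Algebra.linearMap R (H ⊗[R] H)) ∘ₗ γ') ((Algebra.linearMap R (H ⊗[R] H)) ∘ₗ γ),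
      hinv, convB_unit_left]
end

section
/- Let H be a Hopf algebra and γ a 2-cocycle on H with convolution inverse γ̄. Then γ̄ is a 2-cocycle for the twisted Hopf algebra H_γ, and twisting H_γ by γ̄ recovers the original product: (h ·_γ)_{γ̄} k = hk for all h,k ∈ H. -/
open TensorProduct LinearMap

namespace UT
variable {R : Type*} [CommRing R]
variable {C D P C' A : Type*}
  [AddCommMonoid C] [AddCommMonoid D] [AddCommMonoid P] [AddCommMonoid C']
  [Module R C] [Module R D] [Module R P] [Module R C']
  [Ring A] [Algebra R A]

/-- convolution product valued in an algebra -/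
noncomputable def cv (Δc : C →ₗ[R] C ⊗[R] C) (f g : C →ₗ[R] A) : C →ₗ[R] A :=
  mul' R A ∘ₗ map f g ∘ₗ Δc

section maps
variable {M N P' Q M' N' P₁ Q' : Type*}
  [AddCommMonoid M] [AddCommMonoid N] [AddCommMonoid P'] [AddCommMonoid Q]
  [AddCommMonoid M'] [AddCommMonoid N'] [AddCommMonoid P₁] [AddCommMonoid Q']
  [Module R M] [Module R N] [Module R P'] [Module R Q]
  [Module R M'] [Module R N'] [Module R P₁] [Module R Q']

theorem map_left (f : N →ₗ[R] P') (g : M →ₗ[R] N) (h : Q →ₗ[R] Q') :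
    map (f ∘ₗ g) h = map f h ∘ₗ map g LinearMap.id := by
  rw [← map_comp, comp_id]

theorem map_left' (f : N →ₗ[R] P') (g : M →ₗ[R] N) (h : Q →ₗ[R] Q') :
    map (f ∘ₗ g) h = map f LinearMap.id ∘ₗ map g h := by
  rw [← map_comp, id_comp]

theorem map_right (f : Q →ₗ[R] Q') (g : N →ₗ[R] P') (h : M →ₗ[R] N) :
    map f (g ∘ₗ h) = map f g ∘ₗ map LinearMap.id h := by
  rw [← map_comp, comp_id]

theorem map_right' (f : Q →ₗ[R] Q') (g : N →ₗ[R] P') (h : M →ₗ[R] N) :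
    map f (g ∘ₗ h) = map LinearMap.id g ∘ₗ map f h := by
  rw [← map_comp, id_comp]

/-- naturality of tensorTensorTensorComm -/
theorem ttt_nat (f : M →ₗ[R] M') (g : N →ₗ[R] N') (h : P' →ₗ[R] P₁) (k : Q →ₗ[R] Q') :
    map (map f h) (map g k) ∘ₗ (tensorTensorTensorComm R M N P' Q).toLinearMap
      = (tensorTensorTensorComm R M' N' P₁ Q').toLinearMap ∘ₗ map (map f g) (map h k) := by
  ext m n p q; simp

/-- naturality of assoc -/
theorem assoc_nat (f : M →ₗ[R] M') (g : N →ₗ[R] N') (h : P' →ₗ[R] P₁) :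
    map f (map g h) ∘ₗ (TensorProduct.assoc R M N P').toLinearMap
      = (TensorProduct.assoc R M' N' P₁).toLinearMap ∘ₗ map (map f g) h := by
  ext m n p; simp

end maps

/-- associativity of mul' as linear maps -/
theorem mulA_assoc : mul' R A ∘ₗ map (mul' R A) LinearMap.id
    = mul' R A ∘ₗ map LinearMap.id (mul' R A) ∘ₗ (TensorProduct.assoc R A A A).toLinearMap := by
  ext a b c; simp [mul_assoc]

theorem cv_assoc (Δc : C →ₗ[R] C ⊗[R] C)
    (hΔ : (TensorProduct.assoc R C C C).toLinearMap ∘ₗ map Δc LinearMap.id ∘ₗ Δc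
        = map LinearMap.id Δc ∘ₗ Δc)
    (f g h : C →ₗ[R] A) : cv Δc (cv Δc f g) h = cv Δc f (cv Δc g h) := by
  unfold cv
  rw [map_left' (mul' R A), map_left (map f g) Δc h,
      map_right' (f := f) (mul' R A), map_right (f := f) (g := map g h)]
  calc mul' R A ∘ₗ (map (mul' R A) LinearMap.id ∘ₗ
        ((map (map f g) h ∘ₗ map Δc LinearMap.id) ∘ₗ Δc))
      = (mul' R A ∘ₗ map (mul' R A) LinearMap.id) ∘ₗ map (map f g) h
          ∘ₗ (map Δc LinearMap.id ∘ₗ Δc) := by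
        simp only [comp_assoc]
    _ = mul' R A ∘ₗ map LinearMap.id (mul' R A) ∘ₗ
          ((TensorProduct.assoc R A A A).toLinearMap ∘ₗ map (map f g) h)
          ∘ₗ (map Δc LinearMap.id ∘ₗ Δc) := by
        rw [mulA_assoc]; simp only [comp_assoc]
    _ = mul' R A ∘ₗ map LinearMap.id (mul' R A) ∘ₗ map f (map g h)
          ∘ₗ ((TensorProduct.assoc R C C C).toLinearMap ∘ₗ map Δc LinearMap.id ∘ₗ Δc) := by
        rw [← assoc_nat]; simp only [comp_assoc]
    _ = mul' R A ∘ₗ map LinearMap.id (mul' R A) ∘ₗ map f (map g h)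
          ∘ₗ map LinearMap.id Δc ∘ₗ Δc := by rw [hΔ]
    _ = mul' R A ∘ₗ (map LinearMap.id (mul' R A) ∘ₗ (map f (map g h)
          ∘ₗ map LinearMap.id Δc) ∘ₗ Δc) := by simp only [comp_assoc]

theorem cv_one_left (Δc : C →ₗ[R] C ⊗[R] C) (εc : C →ₗ[R] R)
    (hε : map εc LinearMap.id ∘ₗ Δc = TensorProduct.mk R R C 1)
    (f : C →ₗ[R] A) : cv Δc (Algebra.linearMap R A ∘ₗ εc) f = f := by
  unfold cv
  rw [map_left (Algebra.linearMap R A) εc f]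
  calc mul' R A ∘ₗ (map (Algebra.linearMap R A) f ∘ₗ map εc LinearMap.id) ∘ₗ Δc
      = (mul' R A ∘ₗ map (Algebra.linearMap R A) f) ∘ₗ (map εc LinearMap.id ∘ₗ Δc) := by
        simp only [comp_assoc]
    _ = (mul' R A ∘ₗ map (Algebra.linearMap R A) f) ∘ₗ TensorProduct.mk R R C 1 := by rw [hε]
    _ = f := by ext c; simp

theorem cv_one_right (Δc : C →ₗ[R] C ⊗[R] C) (εc : C →ₗ[R] R)
    (hε : map LinearMap.id εc ∘ₗ Δc = (TensorProduct.mk R C R).flip 1)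
    (f : C →ₗ[R] A) : cv Δc f (Algebra.linearMap R A ∘ₗ εc) = f := by
  unfold cv
  rw [map_right (g := Algebra.linearMap R A) f]
  calc mul' R A ∘ₗ (map f (Algebra.linearMap R A) ∘ₗ map LinearMap.id εc) ∘ₗ Δc
      = (mul' R A ∘ₗ map f (Algebra.linearMap R A)) ∘ₗ (map LinearMap.id εc ∘ₗ Δc) := by
        simp only [comp_assoc]
    _ = (mul' R A ∘ₗ map f (Algebra.linearMap R A)) ∘ₗ (TensorProduct.mk R C R).flip 1 := by
        rw [hε]
    _ = f := by ext c; simp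

theorem cv_pullback (Δc : C →ₗ[R] C ⊗[R] C) (Δc' : C' →ₗ[R] C' ⊗[R] C') (φ : C' →ₗ[R] C)
    (hφ : Δc ∘ₗ φ = map φ φ ∘ₗ Δc') (f g : C →ₗ[R] A) :
    cv Δc f g ∘ₗ φ = cv Δc' (f ∘ₗ φ) (g ∘ₗ φ) := by
  unfold cv
  rw [map_comp]
  calc (mul' R A ∘ₗ map f g ∘ₗ Δc) ∘ₗ φ
      = mul' R A ∘ₗ map f g ∘ₗ (Δc ∘ₗ φ) := by simp only [comp_assoc]
    _ = mul' R A ∘ₗ map f g ∘ₗ map φ φ ∘ₗ Δc' := by rw [hφ]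
    _ = mul' R A ∘ₗ (map f g ∘ₗ map φ φ) ∘ₗ Δc' := by simp only [comp_assoc]

theorem cv_eta (Δc : C →ₗ[R] C ⊗[R] C) (u v : C →ₗ[R] R) :
    cv Δc (Algebra.linearMap R A ∘ₗ u) (Algebra.linearMap R A ∘ₗ v)
      = Algebra.linearMap R A ∘ₗ cv Δc u v := by
  unfold cv
  have key : mul' R A ∘ₗ map (Algebra.linearMap R A) (Algebra.linearMap R A)
      = Algebra.linearMap R A ∘ₗ mul' R R := by ext; simp
  rw [map_comp]
  calc mul' R A ∘ₗ (map (Algebra.linearMap R A) (Algebra.linearMap R A) ∘ₗ map u v) ∘ₗ Δc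
      = (mul' R A ∘ₗ map (Algebra.linearMap R A) (Algebra.linearMap R A)) ∘ₗ map u v ∘ₗ Δc := by
        simp only [comp_assoc]
    _ = Algebra.linearMap R A ∘ₗ (mul' R R ∘ₗ map u v ∘ₗ Δc) := by
        rw [key]; simp only [comp_assoc]

end UT

namespace UT
variable {R : Type*} [CommRing R]
variable {C D P : Type*}
  [AddCommMonoid C] [AddCommMonoid D] [AddCommMonoid P]
  [Module R C] [Module R D] [Module R P]

theorem map_split {M N M' N' : Type*} [AddCommMonoid M] [AddCommMonoid N] [AddCommMonoid M']
    [AddCommMonoid N'] [Module R M] [Module R N] [Module R M'] [Module R N']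
    (X : M →ₗ[R] M') (Y : N →ₗ[R] N') :
    map X Y = map LinearMap.id Y ∘ₗ map X LinearMap.id := by
  rw [← map_comp, comp_id, id_comp]

theorem map_split' {M N M' N' : Type*} [AddCommMonoid M] [AddCommMonoid N] [AddCommMonoid M']
    [AddCommMonoid N'] [Module R M] [Module R N] [Module R M'] [Module R N']
    (X : M →ₗ[R] M') (Y : N →ₗ[R] N') :
    map X Y = map X LinearMap.id ∘ₗ map LinearMap.id Y := by
  rw [← map_comp, comp_id, id_comp]

/-- tensor-product comultiplication -/
noncomputable def Δt (ΔC : C →ₗ[R] C ⊗[R] C) (ΔD : D →ₗ[R] D ⊗[R] D) :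
    C ⊗[R] D →ₗ[R] (C ⊗[R] D) ⊗[R] (C ⊗[R] D) :=
  (tensorTensorTensorComm R C C D D).toLinearMap ∘ₗ map ΔC ΔD

/-- tensor-product counit -/
noncomputable def εt (εC : C →ₗ[R] R) (εD : D →ₗ[R] R) : C ⊗[R] D →ₗ[R] R :=
  (TensorProduct.lid R R).toLinearMap ∘ₗ map εC εD

/-- coalgebra axioms as data -/
structure Co (Δc : C →ₗ[R] C ⊗[R] C) (εc : C →ₗ[R] R) : Prop where
  coassoc : (TensorProduct.assoc R C C C).toLinearMap ∘ₗ map Δc LinearMap.id ∘ₗ Δc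
      = map LinearMap.id Δc ∘ₗ Δc
  counit_l : map εc LinearMap.id ∘ₗ Δc = TensorProduct.mk R R C 1
  counit_r : map LinearMap.id εc ∘ₗ Δc = (TensorProduct.mk R C R).flip 1

variable {ΔC : C →ₗ[R] C ⊗[R] C} {εC : C →ₗ[R] R} {ΔD : D →ₗ[R] D ⊗[R] D} {εD : D →ₗ[R] R}

theorem Co.tensor (hC : Co ΔC εC) (hD : Co ΔD εD) : Co (Δt ΔC ΔD) (εt εC εD) where
  coassoc := by
    unfold Δt
    have n1 := ttt_nat (R := R) ΔC (LinearMap.id : C →ₗ[R] C) ΔD (LinearMap.id : D →ₗ[R] D)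
    rw [map_id] at n1
    have n2 := ttt_nat (R := R) (LinearMap.id : C →ₗ[R] C) ΔC (LinearMap.id : D →ₗ[R] D) ΔD
    rw [map_id] at n2
    have hS : (TensorProduct.assoc R (C ⊗[R] D) (C ⊗[R] D) (C ⊗[R] D)).toLinearMap
        ∘ₗ map (tensorTensorTensorComm R C C D D).toLinearMap LinearMap.id
        ∘ₗ (tensorTensorTensorComm R (C ⊗[R] C) C (D ⊗[R] D) D).toLinearMap
        = map LinearMap.id (tensorTensorTensorComm R C C D D).toLinearMap
          ∘ₗ (tensorTensorTensorComm R C (C ⊗[R] C) D (D ⊗[R] D)).toLinearMap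
          ∘ₗ map (TensorProduct.assoc R C C C).toLinearMap
              (TensorProduct.assoc R D D D).toLinearMap := by
      ext c1 c2 c3 d1 d2 d3; simp
    calc (TensorProduct.assoc R (C ⊗[R] D) (C ⊗[R] D) (C ⊗[R] D)).toLinearMap
          ∘ₗ map ((tensorTensorTensorComm R C C D D).toLinearMap ∘ₗ map ΔC ΔD) LinearMap.id
          ∘ₗ ((tensorTensorTensorComm R C C D D).toLinearMap ∘ₗ map ΔC ΔD)
        = (TensorProduct.assoc R (C ⊗[R] D) (C ⊗[R] D) (C ⊗[R] D)).toLinearMap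
          ∘ₗ map (tensorTensorTensorComm R C C D D).toLinearMap LinearMap.id
          ∘ₗ (map (map ΔC ΔD) LinearMap.id ∘ₗ (tensorTensorTensorComm R C C D D).toLinearMap)
          ∘ₗ map ΔC ΔD := by
          rw [map_left]; simp only [comp_assoc]
      _ = (TensorProduct.assoc R (C ⊗[R] D) (C ⊗[R] D) (C ⊗[R] D)).toLinearMap
          ∘ₗ map (tensorTensorTensorComm R C C D D).toLinearMap LinearMap.id
          ∘ₗ ((tensorTensorTensorComm R (C ⊗[R] C) C (D ⊗[R] D) D).toLinearMap
              ∘ₗ map (map ΔC LinearMap.id) (map ΔD LinearMap.id)) ∘ₗ map ΔC ΔD := by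
          rw [n1]
      _ = ((TensorProduct.assoc R (C ⊗[R] D) (C ⊗[R] D) (C ⊗[R] D)).toLinearMap
          ∘ₗ map (tensorTensorTensorComm R C C D D).toLinearMap LinearMap.id
          ∘ₗ (tensorTensorTensorComm R (C ⊗[R] C) C (D ⊗[R] D) D).toLinearMap)
          ∘ₗ map (map ΔC LinearMap.id ∘ₗ ΔC) (map ΔD LinearMap.id ∘ₗ ΔD) := by
          simp only [map_comp, comp_assoc]
      _ = (map LinearMap.id (tensorTensorTensorComm R C C D D).toLinearMap
          ∘ₗ (tensorTensorTensorComm R C (C ⊗[R] C) D (D ⊗[R] D)).toLinearMap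
          ∘ₗ map (TensorProduct.assoc R C C C).toLinearMap (TensorProduct.assoc R D D D).toLinearMap)
          ∘ₗ map (map ΔC LinearMap.id ∘ₗ ΔC) (map ΔD LinearMap.id ∘ₗ ΔD) := by rw [hS]
      _ = map LinearMap.id (tensorTensorTensorComm R C C D D).toLinearMap
          ∘ₗ (tensorTensorTensorComm R C (C ⊗[R] C) D (D ⊗[R] D)).toLinearMap
          ∘ₗ map ((TensorProduct.assoc R C C C).toLinearMap ∘ₗ map ΔC LinearMap.id ∘ₗ ΔC)
              ((TensorProduct.assoc R D D D).toLinearMap ∘ₗ map ΔD LinearMap.id ∘ₗ ΔD) := by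
          simp only [map_comp, comp_assoc]
      _ = map LinearMap.id (tensorTensorTensorComm R C C D D).toLinearMap
          ∘ₗ (tensorTensorTensorComm R C (C ⊗[R] C) D (D ⊗[R] D)).toLinearMap
          ∘ₗ map (map LinearMap.id ΔC ∘ₗ ΔC) (map LinearMap.id ΔD ∘ₗ ΔD) := by
          rw [hC.coassoc, hD.coassoc]
      _ = map LinearMap.id (tensorTensorTensorComm R C C D D).toLinearMap
          ∘ₗ ((tensorTensorTensorComm R C (C ⊗[R] C) D (D ⊗[R] D)).toLinearMap
             ∘ₗ map (map LinearMap.id ΔC) (map LinearMap.id ΔD)) ∘ₗ map ΔC ΔD := by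
          simp only [map_comp, comp_assoc]
      _ = map LinearMap.id (tensorTensorTensorComm R C C D D).toLinearMap
          ∘ₗ (map LinearMap.id (map ΔC ΔD) ∘ₗ (tensorTensorTensorComm R C C D D).toLinearMap)
          ∘ₗ map ΔC ΔD := by rw [← n2]
      _ = map LinearMap.id ((tensorTensorTensorComm R C C D D).toLinearMap ∘ₗ map ΔC ΔD)
          ∘ₗ ((tensorTensorTensorComm R C C D D).toLinearMap ∘ₗ map ΔC ΔD) := by
          rw [map_right (LinearMap.id)]; simp only [comp_assoc]
  counit_l := by
    unfold Δt εt
    have n3 := ttt_nat (R := R) εC (LinearMap.id : C →ₗ[R] C) εD (LinearMap.id : D →ₗ[R] D)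
    rw [map_id] at n3
    have micro : map (TensorProduct.lid R R).toLinearMap LinearMap.id
        ∘ₗ (tensorTensorTensorComm R R C R D).toLinearMap
        ∘ₗ map (TensorProduct.mk R R C 1) (TensorProduct.mk R R D 1)
        = TensorProduct.mk R R (C ⊗[R] D) 1 := by
      ext c d; simp
    calc map ((TensorProduct.lid R R).toLinearMap ∘ₗ map εC εD) LinearMap.id
          ∘ₗ (tensorTensorTensorComm R C C D D).toLinearMap ∘ₗ map ΔC ΔD
        = map (TensorProduct.lid R R).toLinearMap LinearMap.id
          ∘ₗ (map (map εC εD) LinearMap.id ∘ₗ (tensorTensorTensorComm R C C D D).toLinearMap)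
          ∘ₗ map ΔC ΔD := by rw [map_left]; simp only [comp_assoc]
      _ = map (TensorProduct.lid R R).toLinearMap LinearMap.id
          ∘ₗ (tensorTensorTensorComm R R C R D).toLinearMap
          ∘ₗ map (map εC LinearMap.id ∘ₗ ΔC) (map εD LinearMap.id ∘ₗ ΔD) := by
          rw [n3]; simp only [map_comp, comp_assoc]
      _ = map (TensorProduct.lid R R).toLinearMap LinearMap.id
          ∘ₗ (tensorTensorTensorComm R R C R D).toLinearMap
          ∘ₗ map (TensorProduct.mk R R C 1) (TensorProduct.mk R R D 1) := by
          rw [hC.counit_l, hD.counit_l]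
      _ = TensorProduct.mk R R (C ⊗[R] D) 1 := micro
  counit_r := by
    unfold Δt εt
    have n4 := ttt_nat (R := R) (LinearMap.id : C →ₗ[R] C) εC (LinearMap.id : D →ₗ[R] D) εD
    rw [map_id] at n4
    have micro : map LinearMap.id (TensorProduct.lid R R).toLinearMap
        ∘ₗ (tensorTensorTensorComm R C R D R).toLinearMap
        ∘ₗ map ((TensorProduct.mk R C R).flip 1) ((TensorProduct.mk R D R).flip 1)
        = (TensorProduct.mk R (C ⊗[R] D) R).flip 1 := by
      ext c d; simp
    calc map LinearMap.id ((TensorProduct.lid R R).toLinearMap ∘ₗ map εC εD)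
          ∘ₗ (tensorTensorTensorComm R C C D D).toLinearMap ∘ₗ map ΔC ΔD
        = map LinearMap.id (TensorProduct.lid R R).toLinearMap
          ∘ₗ (map LinearMap.id (map εC εD) ∘ₗ (tensorTensorTensorComm R C C D D).toLinearMap)
          ∘ₗ map ΔC ΔD := by rw [map_right (LinearMap.id)]; simp only [comp_assoc]
      _ = map LinearMap.id (TensorProduct.lid R R).toLinearMap
          ∘ₗ (tensorTensorTensorComm R C R D R).toLinearMap
          ∘ₗ map (map LinearMap.id εC ∘ₗ ΔC) (map LinearMap.id εD ∘ₗ ΔD) := by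
          rw [n4]; simp only [map_comp, comp_assoc]
      _ = map LinearMap.id (TensorProduct.lid R R).toLinearMap
          ∘ₗ (tensorTensorTensorComm R C R D R).toLinearMap
          ∘ₗ map ((TensorProduct.mk R C R).flip 1) ((TensorProduct.mk R D R).flip 1) := by
          rw [hC.counit_r, hD.counit_r]
      _ = (TensorProduct.mk R (C ⊗[R] D) R).flip 1 := micro

end UT

namespace UT
variable {R : Type*} [CommRing R]
variable {C D P : Type*}
  [AddCommMonoid C] [AddCommMonoid D] [AddCommMonoid P]
  [Module R C] [Module R D] [Module R P]
variable {ΔC : C →ₗ[R] C ⊗[R] C} {εC : C →ₗ[R] R} {ΔD : D →ₗ[R] D ⊗[R] D} {εD : D →ₗ[R] R}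

theorem mulR_eq_lid : mul' R R = (TensorProduct.lid R R).toLinearMap := by ext; simp

/-- convolution of boxed functionals -/
theorem cv_box (ΔC : C →ₗ[R] C ⊗[R] C) (ΔD : D →ₗ[R] D ⊗[R] D)
    (f g : C →ₗ[R] R) (u v : D →ₗ[R] R) :
    cv (Δt ΔC ΔD) (mul' R R ∘ₗ map f u) (mul' R R ∘ₗ map g v)
      = mul' R R ∘ₗ map (cv ΔC f g) (cv ΔD u v) := by
  unfold cv Δt
  have n := ttt_nat (R := R) f g u v
  have n2 := congrArg (· ∘ₗ map ΔC ΔD) n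
  simp only [comp_assoc] at n2
  have micro : mul' R R ∘ₗ map (mul' R R) (mul' R R)
        ∘ₗ (tensorTensorTensorComm R R R R R).toLinearMap
      = mul' R R ∘ₗ map (mul' R R) (mul' R R) := by
    ext; simp
  calc mul' R R ∘ₗ map (mul' R R ∘ₗ map f u) (mul' R R ∘ₗ map g v)
        ∘ₗ (tensorTensorTensorComm R C C D D).toLinearMap ∘ₗ map ΔC ΔD
      = (mul' R R ∘ₗ map (mul' R R) (mul' R R)
          ∘ₗ (tensorTensorTensorComm R R R R R).toLinearMap)
        ∘ₗ map (map f g) (map u v) ∘ₗ map ΔC ΔD := by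
        simp only [map_comp, comp_assoc]; rw [n2]
    _ = mul' R R ∘ₗ map (mul' R R) (mul' R R) ∘ₗ map (map f g) (map u v) ∘ₗ map ΔC ΔD := by
        rw [micro]; simp only [comp_assoc]
    _ = mul' R R ∘ₗ map (mul' R R ∘ₗ map f g ∘ₗ ΔC) (mul' R R ∘ₗ map u v ∘ₗ ΔD) := by
        simp only [map_comp, comp_assoc]

theorem cv_p1 (ΔC : C →ₗ[R] C ⊗[R] C)
    (hD : map εD LinearMap.id ∘ₗ ΔD = TensorProduct.mk R R D 1)
    (f : C →ₗ[R] R) (T : C →ₗ[R] P) (Z : P ⊗[R] D →ₗ[R] R) :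
    cv (Δt ΔC ΔD) (mul' R R ∘ₗ map f εD) (Z ∘ₗ map T LinearMap.id)
      = Z ∘ₗ map ((TensorProduct.lid R P).toLinearMap ∘ₗ map f T ∘ₗ ΔC) LinearMap.id := by
  unfold cv Δt
  have n := ttt_nat (R := R) f T εD (LinearMap.id : D →ₗ[R] D)
  have n2 := congrArg (· ∘ₗ map ΔC ΔD) n
  simp only [comp_assoc] at n2
  have micro : mul' R R ∘ₗ map (mul' R R) Z ∘ₗ (tensorTensorTensorComm R R P R D).toLinearMap
        ∘ₗ map LinearMap.id (TensorProduct.mk R R D 1)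
      = Z ∘ₗ map (TensorProduct.lid R P).toLinearMap LinearMap.id := by
    ext; simp [mul'_apply, smul_tmul']
  calc mul' R R ∘ₗ map (mul' R R ∘ₗ map f εD) (Z ∘ₗ map T LinearMap.id)
        ∘ₗ (tensorTensorTensorComm R C C D D).toLinearMap ∘ₗ map ΔC ΔD
      = mul' R R ∘ₗ map (mul' R R) Z ∘ₗ (tensorTensorTensorComm R R P R D).toLinearMap
          ∘ₗ map (map f T ∘ₗ ΔC) (map εD LinearMap.id ∘ₗ ΔD) := by
        simp only [map_comp, comp_assoc]; rw [n2]
    _ = mul' R R ∘ₗ map (mul' R R) Z ∘ₗ (tensorTensorTensorComm R R P R D).toLinearMap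
          ∘ₗ map (map f T ∘ₗ ΔC) (TensorProduct.mk R R D 1) := by rw [hD]
    _ = (mul' R R ∘ₗ map (mul' R R) Z ∘ₗ (tensorTensorTensorComm R R P R D).toLinearMap
          ∘ₗ map LinearMap.id (TensorProduct.mk R R D 1)) ∘ₗ map (map f T ∘ₗ ΔC) LinearMap.id := by
        rw [map_split (map f T ∘ₗ ΔC) (TensorProduct.mk R R D 1)]; simp only [comp_assoc]
    _ = Z ∘ₗ map ((TensorProduct.lid R P).toLinearMap ∘ₗ map f T ∘ₗ ΔC) LinearMap.id := by
        rw [micro]; simp only [← map_comp, comp_assoc, comp_id, id_comp]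

theorem cv_p1' (ΔC : C →ₗ[R] C ⊗[R] C)
    (hD : map LinearMap.id εD ∘ₗ ΔD = (TensorProduct.mk R D R).flip 1)
    (g : C →ₗ[R] R) (T : C →ₗ[R] P) (Z : P ⊗[R] D →ₗ[R] R) :
    cv (Δt ΔC ΔD) (Z ∘ₗ map T LinearMap.id) (mul' R R ∘ₗ map g εD)
      = Z ∘ₗ map ((TensorProduct.rid R P).toLinearMap ∘ₗ map T g ∘ₗ ΔC) LinearMap.id := by
  unfold cv Δt
  have n := ttt_nat (R := R) T g (LinearMap.id : D →ₗ[R] D) εD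
  have n2 := congrArg (· ∘ₗ map ΔC ΔD) n
  simp only [comp_assoc] at n2
  have micro : mul' R R ∘ₗ map Z (mul' R R) ∘ₗ (tensorTensorTensorComm R P R D R).toLinearMap
        ∘ₗ map LinearMap.id ((TensorProduct.mk R D R).flip 1)
      = Z ∘ₗ map (TensorProduct.rid R P).toLinearMap LinearMap.id := by
    ext; simp [mul'_apply, smul_tmul']
  calc mul' R R ∘ₗ map (Z ∘ₗ map T LinearMap.id) (mul' R R ∘ₗ map g εD)
        ∘ₗ (tensorTensorTensorComm R C C D D).toLinearMap ∘ₗ map ΔC ΔD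
      = mul' R R ∘ₗ map Z (mul' R R) ∘ₗ (tensorTensorTensorComm R P R D R).toLinearMap
          ∘ₗ map (map T g ∘ₗ ΔC) (map LinearMap.id εD ∘ₗ ΔD) := by
        simp only [map_comp, comp_assoc]; rw [n2]
    _ = mul' R R ∘ₗ map Z (mul' R R) ∘ₗ (tensorTensorTensorComm R P R D R).toLinearMap
          ∘ₗ map (map T g ∘ₗ ΔC) ((TensorProduct.mk R D R).flip 1) := by rw [hD]
    _ = (mul' R R ∘ₗ map Z (mul' R R) ∘ₗ (tensorTensorTensorComm R P R D R).toLinearMap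
          ∘ₗ map LinearMap.id ((TensorProduct.mk R D R).flip 1))
          ∘ₗ map (map T g ∘ₗ ΔC) LinearMap.id := by
        rw [map_split (map T g ∘ₗ ΔC) ((TensorProduct.mk R D R).flip 1)]
        simp only [comp_assoc]
    _ = Z ∘ₗ map ((TensorProduct.rid R P).toLinearMap ∘ₗ map T g ∘ₗ ΔC) LinearMap.id := by
        rw [micro]; simp only [← map_comp, comp_assoc, comp_id, id_comp]

theorem cv_p2 (ΔD : D →ₗ[R] D ⊗[R] D)
    (hC : map εC LinearMap.id ∘ₗ ΔC = TensorProduct.mk R R C 1)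
    (g : D →ₗ[R] R) (T : D →ₗ[R] P) (Z : C ⊗[R] P →ₗ[R] R) :
    cv (Δt ΔC ΔD) (mul' R R ∘ₗ map εC g) (Z ∘ₗ map LinearMap.id T)
      = Z ∘ₗ map LinearMap.id ((TensorProduct.lid R P).toLinearMap ∘ₗ map g T ∘ₗ ΔD) := by
  unfold cv Δt
  have n := ttt_nat (R := R) εC (LinearMap.id : C →ₗ[R] C) g T
  have n2 := congrArg (· ∘ₗ map ΔC ΔD) n
  simp only [comp_assoc] at n2
  have micro : mul' R R ∘ₗ map (mul' R R) Z ∘ₗ (tensorTensorTensorComm R R C R P).toLinearMap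
        ∘ₗ map (TensorProduct.mk R R C 1) LinearMap.id
      = Z ∘ₗ map LinearMap.id (TensorProduct.lid R P).toLinearMap := by
    ext; simp [mul'_apply, smul_tmul']
  calc mul' R R ∘ₗ map (mul' R R ∘ₗ map εC g) (Z ∘ₗ map LinearMap.id T)
        ∘ₗ (tensorTensorTensorComm R C C D D).toLinearMap ∘ₗ map ΔC ΔD
      = mul' R R ∘ₗ map (mul' R R) Z ∘ₗ (tensorTensorTensorComm R R C R P).toLinearMap
          ∘ₗ map (map εC LinearMap.id ∘ₗ ΔC) (map g T ∘ₗ ΔD) := by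
        simp only [map_comp, comp_assoc]; rw [n2]
    _ = mul' R R ∘ₗ map (mul' R R) Z ∘ₗ (tensorTensorTensorComm R R C R P).toLinearMap
          ∘ₗ map (TensorProduct.mk R R C 1) (map g T ∘ₗ ΔD) := by rw [hC]
    _ = (mul' R R ∘ₗ map (mul' R R) Z ∘ₗ (tensorTensorTensorComm R R C R P).toLinearMap
          ∘ₗ map (TensorProduct.mk R R C 1) LinearMap.id)
          ∘ₗ map LinearMap.id (map g T ∘ₗ ΔD) := by
        rw [map_split' (TensorProduct.mk R R C 1) (map g T ∘ₗ ΔD)]; simp only [comp_assoc]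
    _ = Z ∘ₗ map LinearMap.id ((TensorProduct.lid R P).toLinearMap ∘ₗ map g T ∘ₗ ΔD) := by
        rw [micro]; simp only [← map_comp, comp_assoc, comp_id, id_comp]

theorem cv_p2' (ΔD : D →ₗ[R] D ⊗[R] D)
    (hC : map LinearMap.id εC ∘ₗ ΔC = (TensorProduct.mk R C R).flip 1)
    (g : D →ₗ[R] R) (T : D →ₗ[R] P) (Z : C ⊗[R] P →ₗ[R] R) :
    cv (Δt ΔC ΔD) (Z ∘ₗ map LinearMap.id T) (mul' R R ∘ₗ map εC g)
      = Z ∘ₗ map LinearMap.id ((TensorProduct.rid R P).toLinearMap ∘ₗ map T g ∘ₗ ΔD) := by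
  unfold cv Δt
  have n := ttt_nat (R := R) (LinearMap.id : C →ₗ[R] C) εC T g
  have n2 := congrArg (· ∘ₗ map ΔC ΔD) n
  simp only [comp_assoc] at n2
  have micro : mul' R R ∘ₗ map Z (mul' R R) ∘ₗ (tensorTensorTensorComm R C R P R).toLinearMap
        ∘ₗ map ((TensorProduct.mk R C R).flip 1) LinearMap.id
      = Z ∘ₗ map LinearMap.id (TensorProduct.rid R P).toLinearMap := by
    ext; simp [mul'_apply, smul_tmul']
  calc mul' R R ∘ₗ map (Z ∘ₗ map LinearMap.id T) (mul' R R ∘ₗ map εC g)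
        ∘ₗ (tensorTensorTensorComm R C C D D).toLinearMap ∘ₗ map ΔC ΔD
      = mul' R R ∘ₗ map Z (mul' R R) ∘ₗ (tensorTensorTensorComm R C R P R).toLinearMap
          ∘ₗ map (map LinearMap.id εC ∘ₗ ΔC) (map T g ∘ₗ ΔD) := by
        simp only [map_comp, comp_assoc]; rw [n2]
    _ = mul' R R ∘ₗ map Z (mul' R R) ∘ₗ (tensorTensorTensorComm R C R P R).toLinearMap
          ∘ₗ map ((TensorProduct.mk R C R).flip 1) (map T g ∘ₗ ΔD) := by rw [hC]
    _ = (mul' R R ∘ₗ map Z (mul' R R) ∘ₗ (tensorTensorTensorComm R C R P R).toLinearMap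
          ∘ₗ map ((TensorProduct.mk R C R).flip 1) LinearMap.id)
          ∘ₗ map LinearMap.id (map T g ∘ₗ ΔD) := by
        rw [map_split' ((TensorProduct.mk R C R).flip 1) (map T g ∘ₗ ΔD)]
        simp only [comp_assoc]
    _ = Z ∘ₗ map LinearMap.id ((TensorProduct.rid R P).toLinearMap ∘ₗ map T g ∘ₗ ΔD) := by
        rw [micro]; simp only [← map_comp, comp_assoc, comp_id, id_comp]

end UT

namespace UT
section Hspec
variable (R H : Type*) [CommRing R] [Ring H] [HopfAlgebra R H]

/-- counit of the triple tensor coalgebra -/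
noncomputable def ε3 : (H ⊗[R] H) ⊗[R] H →ₗ[R] R :=
  εt (counit2 R H) (Coalgebra.counit (R := R))

theorem coH : Co (Coalgebra.comul (R := R) (A := H)) (Coalgebra.counit (R := R) (A := H)) where
  coassoc := Coalgebra.coassoc
  counit_l := Coalgebra.rTensor_counit_comp_comul
  counit_r := Coalgebra.lTensor_counit_comp_comul

theorem comul2_eq : comul2 R H
    = Δt (Coalgebra.comul (R := R) (A := H)) (Coalgebra.comul (R := R) (A := H)) := rfl

theorem counit2_eq : counit2 R H
    = εt (Coalgebra.counit (R := R) (A := H)) (Coalgebra.counit (R := R) (A := H)) := rfl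

theorem comulC3_eq : comulC3 R H = Δt (comul2 R H) (Coalgebra.comul (R := R) (A := H)) := rfl

theorem co2 : Co (comul2 R H) (counit2 R H) := by
  rw [comul2_eq, counit2_eq]; exact (coH R H).tensor (coH R H)

theorem co3 : Co (comulC3 R H) (ε3 R H) := by
  rw [comulC3_eq]; exact (co2 R H).tensor (coH R H)

theorem mul2_eq : mul' R (H ⊗[R] H)
    = map (mulH R H) (mulH R H) ∘ₗ (tensorTensorTensorComm R H H H H).toLinearMap := by
  ext x1 x2 y1 y2
  simp [Algebra.TensorProduct.tmul_mul_tmul]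

theorem cm : Coalgebra.comul (R := R) ∘ₗ mulH R H
    = mul' R (H ⊗[R] H) ∘ₗ map (Coalgebra.comul (R := R)) (Coalgebra.comul (R := R)) := by
  ext x y; simp

theorem ce : Coalgebra.counit (R := R) ∘ₗ mulH R H
    = mul' R R ∘ₗ map (Coalgebra.counit (R := R)) (Coalgebra.counit (R := R)) := by
  ext x y; simp

theorem hφm : comul2 R H ∘ₗ map (mulH R H) LinearMap.id
    = map (map (mulH R H) LinearMap.id) (map (mulH R H) LinearMap.id) ∘ₗ comulC3 R H := by
  have n := ttt_nat (R := R) (mulH R H) (mulH R H) (LinearMap.id : H →ₗ[R] H)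
    (LinearMap.id : H →ₗ[R] H)
  rw [map_id] at n
  have n2 := congrArg (· ∘ₗ map ((tensorTensorTensorComm R H H H H).toLinearMap
    ∘ₗ map (Coalgebra.comul (R := R)) (Coalgebra.comul (R := R))) (Coalgebra.comul (R := R))) n
  simp only [comp_assoc] at n2
  unfold comulC3 comul2
  calc ((tensorTensorTensorComm R H H H H).toLinearMap
        ∘ₗ map (Coalgebra.comul (R := R)) (Coalgebra.comul (R := R)))
        ∘ₗ map (mulH R H) LinearMap.id
      = (tensorTensorTensorComm R H H H H).toLinearMap
        ∘ₗ map (Coalgebra.comul (R := R) ∘ₗ mulH R H) (Coalgebra.comul (R := R)) := by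
        simp only [comp_assoc, ← map_comp, comp_id, id_comp]
    _ = (tensorTensorTensorComm R H H H H).toLinearMap
        ∘ₗ map (mul' R (H ⊗[R] H) ∘ₗ map (Coalgebra.comul (R := R)) (Coalgebra.comul (R := R)))
            (Coalgebra.comul (R := R)) := by rw [cm]
    _ = (tensorTensorTensorComm R H H H H).toLinearMap
        ∘ₗ map ((map (mulH R H) (mulH R H) ∘ₗ (tensorTensorTensorComm R H H H H).toLinearMap)
              ∘ₗ map (Coalgebra.comul (R := R)) (Coalgebra.comul (R := R)))
            (Coalgebra.comul (R := R)) := by rw [mul2_eq]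
    _ = (tensorTensorTensorComm R H H H H).toLinearMap
        ∘ₗ map (map (mulH R H) (mulH R H)) LinearMap.id
        ∘ₗ map ((tensorTensorTensorComm R H H H H).toLinearMap
            ∘ₗ map (Coalgebra.comul (R := R)) (Coalgebra.comul (R := R)))
            (Coalgebra.comul (R := R)) := by
        rw [comp_assoc, map_left']
    _ = map (map (mulH R H) LinearMap.id) (map (mulH R H) LinearMap.id)
        ∘ₗ (tensorTensorTensorComm R (H ⊗[R] H) (H ⊗[R] H) H H).toLinearMap
        ∘ₗ map ((tensorTensorTensorComm R H H H H).toLinearMap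
            ∘ₗ map (Coalgebra.comul (R := R)) (Coalgebra.comul (R := R)))
            (Coalgebra.comul (R := R)) := n2.symm

theorem εm : counit2 R H ∘ₗ map (mulH R H) LinearMap.id = ε3 R H := by
  unfold ε3 εt
  rw [counit2_eq]
  unfold εt
  calc ((TensorProduct.lid R R).toLinearMap
        ∘ₗ map (Coalgebra.counit (R := R)) (Coalgebra.counit (R := R)))
        ∘ₗ map (mulH R H) LinearMap.id
      = (TensorProduct.lid R R).toLinearMap
        ∘ₗ map (Coalgebra.counit (R := R) ∘ₗ mulH R H) (Coalgebra.counit (R := R)) := by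
        simp only [comp_assoc, ← map_comp, comp_id, id_comp]
    _ = (TensorProduct.lid R R).toLinearMap
        ∘ₗ map (mul' R R ∘ₗ map (Coalgebra.counit (R := R)) (Coalgebra.counit (R := R)))
            (Coalgebra.counit (R := R)) := by rw [ce]
    _ = (TensorProduct.lid R R).toLinearMap ∘ₗ map (counit2 R H) (Coalgebra.counit (R := R)) := by
        rw [mulR_eq_lid]; rfl

theorem hφim : comul2 R H ∘ₗ map LinearMap.id (mulH R H)
    = map (map LinearMap.id (mulH R H)) (map LinearMap.id (mulH R H))
      ∘ₗ Δt (Coalgebra.comul (R := R) (A := H)) (comul2 R H) := by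
  have n := ttt_nat (R := R) (LinearMap.id : H →ₗ[R] H) (LinearMap.id : H →ₗ[R] H)
    (mulH R H) (mulH R H)
  rw [map_id] at n
  have n2 := congrArg (· ∘ₗ map (Coalgebra.comul (R := R))
    ((tensorTensorTensorComm R H H H H).toLinearMap
      ∘ₗ map (Coalgebra.comul (R := R)) (Coalgebra.comul (R := R)))) n
  simp only [comp_assoc] at n2
  unfold Δt comul2
  calc ((tensorTensorTensorComm R H H H H).toLinearMap
        ∘ₗ map (Coalgebra.comul (R := R)) (Coalgebra.comul (R := R)))
        ∘ₗ map LinearMap.id (mulH R H)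
      = (tensorTensorTensorComm R H H H H).toLinearMap
        ∘ₗ map (Coalgebra.comul (R := R)) (Coalgebra.comul (R := R) ∘ₗ mulH R H) := by
        simp only [comp_assoc, ← map_comp, comp_id, id_comp]
    _ = (tensorTensorTensorComm R H H H H).toLinearMap
        ∘ₗ map (Coalgebra.comul (R := R))
            (mul' R (H ⊗[R] H) ∘ₗ map (Coalgebra.comul (R := R)) (Coalgebra.comul (R := R))) := by
        rw [cm]
    _ = (tensorTensorTensorComm R H H H H).toLinearMap
        ∘ₗ map (Coalgebra.comul (R := R))
            ((map (mulH R H) (mulH R H) ∘ₗ (tensorTensorTensorComm R H H H H).toLinearMap)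
              ∘ₗ map (Coalgebra.comul (R := R)) (Coalgebra.comul (R := R))) := by rw [mul2_eq]
    _ = (tensorTensorTensorComm R H H H H).toLinearMap
        ∘ₗ map LinearMap.id (map (mulH R H) (mulH R H))
        ∘ₗ map (Coalgebra.comul (R := R))
            ((tensorTensorTensorComm R H H H H).toLinearMap
              ∘ₗ map (Coalgebra.comul (R := R)) (Coalgebra.comul (R := R))) := by
        rw [comp_assoc, map_right']
    _ = map (map LinearMap.id (mulH R H)) (map LinearMap.id (mulH R H))
        ∘ₗ (tensorTensorTensorComm R H H (H ⊗[R] H) (H ⊗[R] H)).toLinearMap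
        ∘ₗ map (Coalgebra.comul (R := R))
            ((tensorTensorTensorComm R H H H H).toLinearMap
              ∘ₗ map (Coalgebra.comul (R := R)) (Coalgebra.comul (R := R))) := n2.symm

theorem εim : counit2 R H ∘ₗ map LinearMap.id (mulH R H)
    = εt (Coalgebra.counit (R := R) (A := H)) (counit2 R H) := by
  unfold εt
  rw [counit2_eq]
  unfold εt
  calc ((TensorProduct.lid R R).toLinearMap
        ∘ₗ map (Coalgebra.counit (R := R)) (Coalgebra.counit (R := R)))
        ∘ₗ map LinearMap.id (mulH R H)
      = (TensorProduct.lid R R).toLinearMap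
        ∘ₗ map (Coalgebra.counit (R := R)) (Coalgebra.counit (R := R) ∘ₗ mulH R H) := by
        simp only [comp_assoc, ← map_comp, comp_id, id_comp]
    _ = (TensorProduct.lid R R).toLinearMap
        ∘ₗ map (Coalgebra.counit (R := R))
            (mul' R R ∘ₗ map (Coalgebra.counit (R := R)) (Coalgebra.counit (R := R))) := by
        rw [ce]
    _ = (TensorProduct.lid R R).toLinearMap
        ∘ₗ map (Coalgebra.counit (R := R))
            ((TensorProduct.lid R R).toLinearMap
              ∘ₗ map (Coalgebra.counit (R := R)) (Coalgebra.counit (R := R))) := by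
        rw [mulR_eq_lid]


theorem εa : εt (Coalgebra.counit (R := R) (A := H)) (counit2 R H)
    ∘ₗ (TensorProduct.assoc R H H H).toLinearMap = ε3 R H := by
  unfold ε3 εt counit2
  ext x y z
  simp [mul_assoc]

theorem hφa : Δt (Coalgebra.comul (R := R) (A := H)) (comul2 R H)
    ∘ₗ (TensorProduct.assoc R H H H).toLinearMap
    = map (TensorProduct.assoc R H H H).toLinearMap (TensorProduct.assoc R H H H).toLinearMap
      ∘ₗ comulC3 R H := by
  have na := assoc_nat (R := R) (Coalgebra.comul (R := R) (A := H))
    (Coalgebra.comul (R := R) (A := H)) (Coalgebra.comul (R := R) (A := H))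
  have S2 : (tensorTensorTensorComm R H H (H ⊗[R] H) (H ⊗[R] H)).toLinearMap
      ∘ₗ map LinearMap.id (tensorTensorTensorComm R H H H H).toLinearMap
      ∘ₗ (TensorProduct.assoc R (H ⊗[R] H) (H ⊗[R] H) (H ⊗[R] H)).toLinearMap
      = map (TensorProduct.assoc R H H H).toLinearMap (TensorProduct.assoc R H H H).toLinearMap
        ∘ₗ (tensorTensorTensorComm R (H ⊗[R] H) (H ⊗[R] H) H H).toLinearMap
        ∘ₗ map (tensorTensorTensorComm R H H H H).toLinearMap LinearMap.id := by
    ext a b c d e f; simp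
  have S2' := congrArg (· ∘ₗ map (map (Coalgebra.comul (R := R) (A := H))
    (Coalgebra.comul (R := R) (A := H))) (Coalgebra.comul (R := R) (A := H))) S2
  simp only [comp_assoc] at S2'
  unfold Δt comulC3 comul2
  calc ((tensorTensorTensorComm R H H (H ⊗[R] H) (H ⊗[R] H)).toLinearMap
        ∘ₗ map (Coalgebra.comul (R := R))
            ((tensorTensorTensorComm R H H H H).toLinearMap
              ∘ₗ map (Coalgebra.comul (R := R)) (Coalgebra.comul (R := R))))
        ∘ₗ (TensorProduct.assoc R H H H).toLinearMap
      = (tensorTensorTensorComm R H H (H ⊗[R] H) (H ⊗[R] H)).toLinearMap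
        ∘ₗ map LinearMap.id (tensorTensorTensorComm R H H H H).toLinearMap
        ∘ₗ map (Coalgebra.comul (R := R))
            (map (Coalgebra.comul (R := R)) (Coalgebra.comul (R := R)))
        ∘ₗ (TensorProduct.assoc R H H H).toLinearMap := by
        rw [map_right' (Coalgebra.comul (R := R))]
        all_goals simp only [comp_assoc]
    _ = (tensorTensorTensorComm R H H (H ⊗[R] H) (H ⊗[R] H)).toLinearMap
        ∘ₗ map LinearMap.id (tensorTensorTensorComm R H H H H).toLinearMap
        ∘ₗ (TensorProduct.assoc R (H ⊗[R] H) (H ⊗[R] H) (H ⊗[R] H)).toLinearMap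
        ∘ₗ map (map (Coalgebra.comul (R := R)) (Coalgebra.comul (R := R)))
            (Coalgebra.comul (R := R)) := by
        rw [na]
    _ = map (TensorProduct.assoc R H H H).toLinearMap (TensorProduct.assoc R H H H).toLinearMap
        ∘ₗ (tensorTensorTensorComm R (H ⊗[R] H) (H ⊗[R] H) H H).toLinearMap
        ∘ₗ map (tensorTensorTensorComm R H H H H).toLinearMap LinearMap.id
        ∘ₗ map (map (Coalgebra.comul (R := R)) (Coalgebra.comul (R := R)))
            (Coalgebra.comul (R := R)) := S2'
    _ = map (TensorProduct.assoc R H H H).toLinearMap (TensorProduct.assoc R H H H).toLinearMap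
        ∘ₗ (tensorTensorTensorComm R (H ⊗[R] H) (H ⊗[R] H) H H).toLinearMap
        ∘ₗ map ((tensorTensorTensorComm R H H H H).toLinearMap
            ∘ₗ map (Coalgebra.comul (R := R)) (Coalgebra.comul (R := R)))
            (Coalgebra.comul (R := R)) := by
        rw [map_left']
        all_goals simp only [comp_assoc]

theorem hφdm : comul2 R H ∘ₗ (map LinearMap.id (mulH R H)
      ∘ₗ (TensorProduct.assoc R H H H).toLinearMap)
    = map (map LinearMap.id (mulH R H) ∘ₗ (TensorProduct.assoc R H H H).toLinearMap)
        (map LinearMap.id (mulH R H) ∘ₗ (TensorProduct.assoc R H H H).toLinearMap)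
      ∘ₗ comulC3 R H := by
  calc comul2 R H ∘ₗ (map LinearMap.id (mulH R H) ∘ₗ (TensorProduct.assoc R H H H).toLinearMap)
      = (comul2 R H ∘ₗ map LinearMap.id (mulH R H)) ∘ₗ (TensorProduct.assoc R H H H).toLinearMap := by
        simp only [comp_assoc]
    _ = map (map LinearMap.id (mulH R H)) (map LinearMap.id (mulH R H))
        ∘ₗ (Δt (Coalgebra.comul (R := R) (A := H)) (comul2 R H)
          ∘ₗ (TensorProduct.assoc R H H H).toLinearMap) := by
        rw [hφim]; simp only [comp_assoc]
    _ = map (map LinearMap.id (mulH R H)) (map LinearMap.id (mulH R H))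
        ∘ₗ map (TensorProduct.assoc R H H H).toLinearMap (TensorProduct.assoc R H H H).toLinearMap
        ∘ₗ comulC3 R H := by rw [hφa]
    _ = map (map LinearMap.id (mulH R H) ∘ₗ (TensorProduct.assoc R H H H).toLinearMap)
          (map LinearMap.id (mulH R H) ∘ₗ (TensorProduct.assoc R H H H).toLinearMap)
        ∘ₗ comulC3 R H := by
        simp only [← comp_assoc]; rw [← map_comp]

theorem εdm : counit2 R H ∘ₗ (map LinearMap.id (mulH R H)
      ∘ₗ (TensorProduct.assoc R H H H).toLinearMap) = ε3 R H := by
  calc counit2 R H ∘ₗ (map LinearMap.id (mulH R H) ∘ₗ (TensorProduct.assoc R H H H).toLinearMap)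
      = (counit2 R H ∘ₗ map LinearMap.id (mulH R H)) ∘ₗ (TensorProduct.assoc R H H H).toLinearMap := by
        simp only [comp_assoc]
    _ = εt (Coalgebra.counit (R := R) (A := H)) (counit2 R H)
        ∘ₗ (TensorProduct.assoc R H H H).toLinearMap := by rw [εim]
    _ = ε3 R H := εa R H

theorem F5 : mul' R H ∘ₗ map (Algebra.linearMap R H) LinearMap.id
    = (TensorProduct.lid R H).toLinearMap := by
  ext; simp [Algebra.smul_def]

theorem F6 : mul' R H ∘ₗ map LinearMap.id (Algebra.linearMap R H)
    = (TensorProduct.rid R H).toLinearMap := by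
  ext; simp [Algebra.smul_def, Algebra.commutes]

theorem F8 : (TensorProduct.lid R H).toLinearMap ∘ₗ (TensorProduct.rid R (R ⊗[R] H)).toLinearMap
    = (TensorProduct.rid R H).toLinearMap ∘ₗ map (TensorProduct.lid R H).toLinearMap
        LinearMap.id := by
  ext; simp

theorem tw_form (μ : H ⊗[R] H →ₗ[R] H) (f g : H ⊗[R] H →ₗ[R] R) :
    twistMul R H μ f g = (TensorProduct.rid R H).toLinearMap
      ∘ₗ map ((TensorProduct.lid R H).toLinearMap ∘ₗ map f μ ∘ₗ comul2 R H) g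
      ∘ₗ comul2 R H := by
  unfold twistMul
  simp only [← comp_assoc]
  rw [F8]
  simp only [comp_assoc, ← map_comp, comp_id, id_comp]

theorem tw_conv (μ : H ⊗[R] H →ₗ[R] H) (f g : H ⊗[R] H →ₗ[R] R) :
    twistMul R H μ f g
      = cv (comul2 R H) (cv (comul2 R H) (Algebra.linearMap R H ∘ₗ f) μ)
          (Algebra.linearMap R H ∘ₗ g) := by
  rw [tw_form]
  unfold cv
  have hX : mul' R H ∘ₗ map (Algebra.linearMap R H ∘ₗ f) μ ∘ₗ comul2 R H
      = (TensorProduct.lid R H).toLinearMap ∘ₗ map f μ ∘ₗ comul2 R H := by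
    rw [map_left']
    simp only [← comp_assoc]
    rw [F5]
  rw [hX, map_right' ((TensorProduct.lid R H).toLinearMap ∘ₗ map f μ ∘ₗ comul2 R H)]
  simp only [← comp_assoc]
  rw [F6]

theorem hj1 : comul2 R H ∘ₗ (TensorProduct.mk R H H).flip 1
    = map ((TensorProduct.mk R H H).flip 1) ((TensorProduct.mk R H H).flip 1)
      ∘ₗ Coalgebra.comul (R := R) := by
  have step1 : map (Coalgebra.comul (R := R) (A := H)) (Coalgebra.comul (R := R) (A := H))
      ∘ₗ (TensorProduct.mk R H H).flip 1
      = (TensorProduct.mk R (H ⊗[R] H) (H ⊗[R] H)).flip (1 ⊗ₜ[R] 1)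
        ∘ₗ Coalgebra.comul (R := R) := by
    ext h
    simp [Algebra.TensorProduct.one_def]
  have step2 : (tensorTensorTensorComm R H H H H).toLinearMap
      ∘ₗ (TensorProduct.mk R (H ⊗[R] H) (H ⊗[R] H)).flip (1 ⊗ₜ[R] 1)
      = map ((TensorProduct.mk R H H).flip 1) ((TensorProduct.mk R H H).flip 1) := by
    ext x y; simp
  unfold comul2
  simp only [comp_assoc]
  rw [step1]
  simp only [← comp_assoc]
  rw [step2]

theorem εj1 : counit2 R H ∘ₗ (TensorProduct.mk R H H).flip 1
    = Coalgebra.counit (R := R) (A := H) := by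
  unfold counit2
  ext h; simp

theorem hj0 : comul2 R H ∘ₗ TensorProduct.mk R H H 1
    = map (TensorProduct.mk R H H 1) (TensorProduct.mk R H H 1)
      ∘ₗ Coalgebra.comul (R := R) := by
  have step1 : map (Coalgebra.comul (R := R) (A := H)) (Coalgebra.comul (R := R) (A := H))
      ∘ₗ TensorProduct.mk R H H 1
      = TensorProduct.mk R (H ⊗[R] H) (H ⊗[R] H) (1 ⊗ₜ[R] 1)
        ∘ₗ Coalgebra.comul (R := R) := by
    ext h
    simp [Algebra.TensorProduct.one_def]
  have step2 : (tensorTensorTensorComm R H H H H).toLinearMap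
      ∘ₗ TensorProduct.mk R (H ⊗[R] H) (H ⊗[R] H) (1 ⊗ₜ[R] 1)
      = map (TensorProduct.mk R H H 1) (TensorProduct.mk R H H 1) := by
    ext x y; simp
  unfold comul2
  simp only [comp_assoc]
  rw [step1]
  simp only [← comp_assoc]
  rw [step2]

theorem εj0 : counit2 R H ∘ₗ TensorProduct.mk R H H 1
    = Coalgebra.counit (R := R) (A := H) := by
  unfold counit2
  ext h; simp

end Hspec

/-- convolution monoid -/
noncomputable def convMonoid {R : Type*} [CommRing R] {C A : Type*} [AddCommMonoid C]
    [Module R C] [Ring A] [Algebra R A] (Δc : C →ₗ[R] C ⊗[R] C) (εc : C →ₗ[R] R)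
    (h : Co Δc εc) : Monoid (C →ₗ[R] A) where
  mul f g := cv Δc f g
  one := Algebra.linearMap R A ∘ₗ εc
  mul_assoc := cv_assoc Δc h.coassoc
  one_mul := cv_one_left Δc εc h.counit_l
  mul_one := cv_one_right Δc εc h.counit_r

theorem etaR_comp {R : Type*} [CommRing R] {X : Type*} [AddCommMonoid X] [Module R X]
    (f : X →ₗ[R] R) : Algebra.linearMap R R ∘ₗ f = f := by
  ext x; simp

theorem minv {M : Type*} [Monoid M] {a b c d a' b' c' d' : M}
    (hab : a * b = c * d) (ha' : a' * a = 1) (hb' : b' * b = 1)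
    (hc : c * c' = 1) (hc' : c' * c = 1) (hd : d * d' = 1) :
    a' * ((a * b') * a') = c' * ((c * d') * c') := by
  have h1 : (b' * a') * (a * b) = 1 := by
    rw [mul_assoc, ← mul_assoc a' a b, ha', one_mul, hb']
  have h2 : (c * d) * (d' * c') = 1 := by
    rw [mul_assoc, ← mul_assoc d d' c', hd, one_mul, hc]
  rw [hab] at h1
  have h3 : b' * a' = d' * c' := by
    calc b' * a' = ((b' * a') * (c * d)) * (d' * c') := by rw [mul_assoc, h2, mul_one]
      _ = d' * c' := by rw [h1, one_mul]
  have l : a' * ((a * b') * a') = b' * a' := by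
    rw [mul_assoc a b' a', ← mul_assoc a' a (b' * a'), ha', one_mul]
  have r : c' * ((c * d') * c') = d' * c' := by
    rw [mul_assoc c d' c', ← mul_assoc c' c (d' * c'), hc', one_mul]
  rw [l, r, h3]

theorem muntw {M : Type*} [Monoid M] {u v m : M} (huv : u * v = 1) (hvu : v * u = 1) :
    v * ((u * m) * v) * u = m := by
  rw [mul_assoc u m v, ← mul_assoc v u (m * v), hvu, one_mul, mul_assoc m v u, hvu, mul_one]

end UT
/-- the convolution inverse `γ'` of a 2-cocycle `γ` is a 2-cocycle for the
twisted Hopf algebra `H_γ`, and twisting `H_γ` by `γ'` recovers the original product. -/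
theorem untwist (R H : Type*) [CommRing R] [Ring H] [HopfAlgebra R H]
    (γ γ' : H ⊗[R] H →ₗ[R] R) (hco : IsCocycle R H (mulH R H) γ γ') :
    IsCocycle R H (twistMul R H (mulH R H) γ γ') γ' γ
    ∧ twistMul R H (twistMul R H (mulH R H) γ γ') γ' γ = mulH R H := by
  obtain ⟨hcoc, hir, hil, hur, hul⟩ := hco
  letI instM3 : Monoid ((H ⊗[R] H) ⊗[R] H →ₗ[R] R) :=
    UT.convMonoid (comulC3 R H) (UT.ε3 R H) (UT.co3 R H)
  letI instM2 : Monoid (H ⊗[R] H →ₗ[R] H) :=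
    UT.convMonoid (comul2 R H) (counit2 R H) (UT.co2 R H)
  have hir' : UT.cv (comul2 R H) γ γ' = counit2 R H := hir
  have hil' : UT.cv (comul2 R H) γ' γ = counit2 R H := hil
  have cεε : UT.cv (Coalgebra.comul (R := R) (A := H)) (Coalgebra.counit (R := R))
      (Coalgebra.counit (R := R)) = Coalgebra.counit (R := R) (A := H) := by
    have h := UT.cv_one_left (A := R) (Coalgebra.comul (R := R) (A := H))
      (Coalgebra.counit (R := R)) (UT.coH R H).counit_l (Coalgebra.counit (R := R))
    rwa [UT.etaR_comp] at h
  have εa' : (TensorProduct.lid R R).toLinearMap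
      ∘ₗ map (Coalgebra.counit (R := R) (A := H)) (counit2 R H)
      ∘ₗ (TensorProduct.assoc R H H H).toLinearMap = UT.ε3 R H := by
    have h := UT.εa R H
    unfold UT.εt at h
    simp only [comp_assoc] at h
    exact h
  -- inverse facts
  have hA'A : UT.cv (comulC3 R H) (mul' R R ∘ₗ map γ' (Coalgebra.counit (R := R)))
      (mul' R R ∘ₗ map γ (Coalgebra.counit (R := R))) = UT.ε3 R H := by
    rw [UT.comulC3_eq, UT.cv_box, hil', cεε, UT.mulR_eq_lid]; rfl
  have hCC' : UT.cv (comulC3 R H)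
      ((mul' R R ∘ₗ map (Coalgebra.counit (R := R)) γ) ∘ₗ (TensorProduct.assoc R H H H).toLinearMap)
      ((mul' R R ∘ₗ map (Coalgebra.counit (R := R)) γ') ∘ₗ (TensorProduct.assoc R H H H).toLinearMap)
      = UT.ε3 R H := by
    rw [← UT.cv_pullback (UT.Δt (Coalgebra.comul (R := R) (A := H)) (comul2 R H)) (comulC3 R H)
      (TensorProduct.assoc R H H H).toLinearMap (UT.hφa R H), UT.cv_box, cεε, hir',
      UT.mulR_eq_lid]
    simp only [comp_assoc]
    exact εa'
  have hC'C : UT.cv (comulC3 R H)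
      ((mul' R R ∘ₗ map (Coalgebra.counit (R := R)) γ') ∘ₗ (TensorProduct.assoc R H H H).toLinearMap)
      ((mul' R R ∘ₗ map (Coalgebra.counit (R := R)) γ) ∘ₗ (TensorProduct.assoc R H H H).toLinearMap)
      = UT.ε3 R H := by
    rw [← UT.cv_pullback (UT.Δt (Coalgebra.comul (R := R) (A := H)) (comul2 R H)) (comulC3 R H)
      (TensorProduct.assoc R H H H).toLinearMap (UT.hφa R H), UT.cv_box, cεε, hil',
      UT.mulR_eq_lid]
    simp only [comp_assoc]
    exact εa'
  have hBtB : UT.cv (comulC3 R H) (γ' ∘ₗ map (mulH R H) LinearMap.id)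
      (γ ∘ₗ map (mulH R H) LinearMap.id) = UT.ε3 R H := by
    rw [← UT.cv_pullback (comul2 R H) (comulC3 R H) (map (mulH R H) LinearMap.id) (UT.hφm R H)
      γ' γ, hil', UT.εm]
  have hDDt : UT.cv (comulC3 R H)
      (γ ∘ₗ (map LinearMap.id (mulH R H) ∘ₗ (TensorProduct.assoc R H H H).toLinearMap))
      (γ' ∘ₗ (map LinearMap.id (mulH R H) ∘ₗ (TensorProduct.assoc R H H H).toLinearMap))
      = UT.ε3 R H := by
    rw [← UT.cv_pullback (comul2 R H) (comulC3 R H)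
      (map LinearMap.id (mulH R H) ∘ₗ (TensorProduct.assoc R H H H).toLinearMap) (UT.hφdm R H)
      γ γ', hir', UT.εdm]
  -- B' and D' identifications
  have s1 : UT.cv (comulC3 R H) (mul' R R ∘ₗ map γ (Coalgebra.counit (R := R)))
      (γ' ∘ₗ map (mulH R H) LinearMap.id)
      = γ' ∘ₗ map ((TensorProduct.lid R H).toLinearMap ∘ₗ map γ (mulH R H) ∘ₗ comul2 R H)
          LinearMap.id := by
    rw [UT.comulC3_eq]
    exact UT.cv_p1 (comul2 R H) (UT.coH R H).counit_l γ (mulH R H) γ'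
  have s2 : UT.cv (comulC3 R H)
      (γ' ∘ₗ map ((TensorProduct.lid R H).toLinearMap ∘ₗ map γ (mulH R H) ∘ₗ comul2 R H)
        LinearMap.id)
      (mul' R R ∘ₗ map γ' (Coalgebra.counit (R := R)))
      = γ' ∘ₗ map ((TensorProduct.rid R H).toLinearMap
          ∘ₗ map ((TensorProduct.lid R H).toLinearMap ∘ₗ map γ (mulH R H) ∘ₗ comul2 R H) γ'
          ∘ₗ comul2 R H) LinearMap.id := by
    rw [UT.comulC3_eq]
    exact UT.cv_p1' (comul2 R H) (UT.coH R H).counit_r γ'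
      ((TensorProduct.lid R H).toLinearMap ∘ₗ map γ (mulH R H) ∘ₗ comul2 R H) γ'
  have hB'eq : γ' ∘ₗ map (twistMul R H (mulH R H) γ γ') LinearMap.id
      = UT.cv (comulC3 R H)
          (UT.cv (comulC3 R H) (mul' R R ∘ₗ map γ (Coalgebra.counit (R := R)))
            (γ' ∘ₗ map (mulH R H) LinearMap.id))
          (mul' R R ∘ₗ map γ' (Coalgebra.counit (R := R))) := by
    rw [s1, s2, ← UT.tw_form]
  have t1 : UT.cv (comulC3 R H)
      ((mul' R R ∘ₗ map (Coalgebra.counit (R := R)) γ) ∘ₗ (TensorProduct.assoc R H H H).toLinearMap)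
      ((γ' ∘ₗ map LinearMap.id (mulH R H)) ∘ₗ (TensorProduct.assoc R H H H).toLinearMap)
      = (γ' ∘ₗ map LinearMap.id
          ((TensorProduct.lid R H).toLinearMap ∘ₗ map γ (mulH R H) ∘ₗ comul2 R H))
        ∘ₗ (TensorProduct.assoc R H H H).toLinearMap := by
    rw [← UT.cv_pullback (UT.Δt (Coalgebra.comul (R := R) (A := H)) (comul2 R H)) (comulC3 R H)
      (TensorProduct.assoc R H H H).toLinearMap (UT.hφa R H)]
    congr 1
    exact UT.cv_p2 (comul2 R H) (UT.coH R H).counit_l γ (mulH R H) γ'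
  have t2 : UT.cv (comulC3 R H)
      ((γ' ∘ₗ map LinearMap.id
          ((TensorProduct.lid R H).toLinearMap ∘ₗ map γ (mulH R H) ∘ₗ comul2 R H))
        ∘ₗ (TensorProduct.assoc R H H H).toLinearMap)
      ((mul' R R ∘ₗ map (Coalgebra.counit (R := R)) γ') ∘ₗ (TensorProduct.assoc R H H H).toLinearMap)
      = (γ' ∘ₗ map LinearMap.id ((TensorProduct.rid R H).toLinearMap
          ∘ₗ map ((TensorProduct.lid R H).toLinearMap ∘ₗ map γ (mulH R H) ∘ₗ comul2 R H) γ'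
          ∘ₗ comul2 R H))
        ∘ₗ (TensorProduct.assoc R H H H).toLinearMap := by
    rw [← UT.cv_pullback (UT.Δt (Coalgebra.comul (R := R) (A := H)) (comul2 R H)) (comulC3 R H)
      (TensorProduct.assoc R H H H).toLinearMap (UT.hφa R H)]
    congr 1
    exact UT.cv_p2' (comul2 R H) (UT.coH R H).counit_r γ'
      ((TensorProduct.lid R H).toLinearMap ∘ₗ map γ (mulH R H) ∘ₗ comul2 R H) γ'
  have hD'eq : γ' ∘ₗ map LinearMap.id (twistMul R H (mulH R H) γ γ')
        ∘ₗ (TensorProduct.assoc R H H H).toLinearMap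
      = UT.cv (comulC3 R H)
          (UT.cv (comulC3 R H)
            ((mul' R R ∘ₗ map (Coalgebra.counit (R := R)) γ)
              ∘ₗ (TensorProduct.assoc R H H H).toLinearMap)
            ((γ' ∘ₗ map LinearMap.id (mulH R H)) ∘ₗ (TensorProduct.assoc R H H H).toLinearMap))
          ((mul' R R ∘ₗ map (Coalgebra.counit (R := R)) γ')
            ∘ₗ (TensorProduct.assoc R H H H).toLinearMap) := by
    rw [t1, t2, ← UT.tw_form]
    simp only [comp_assoc]
  have one3 : Algebra.linearMap R R ∘ₗ UT.ε3 R H = UT.ε3 R H := UT.etaR_comp _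
  -- main cocycle identity
  have main : UT.cv (comulC3 R H) (mul' R R ∘ₗ map γ' (Coalgebra.counit (R := R)))
      (γ' ∘ₗ map (twistMul R H (mulH R H) γ γ') LinearMap.id)
      = UT.cv (comulC3 R H)
        ((mul' R R ∘ₗ map (Coalgebra.counit (R := R)) γ')
          ∘ₗ (TensorProduct.assoc R H H H).toLinearMap)
        (γ' ∘ₗ map LinearMap.id (twistMul R H (mulH R H) γ γ')
          ∘ₗ (TensorProduct.assoc R H H H).toLinearMap) := by
    rw [hB'eq, hD'eq]
    exact UT.minv
      (a := mul' R R ∘ₗ map γ (Coalgebra.counit (R := R)))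
      (b := γ ∘ₗ map (mulH R H) LinearMap.id)
      (a' := mul' R R ∘ₗ map γ' (Coalgebra.counit (R := R)))
      (b' := γ' ∘ₗ map (mulH R H) LinearMap.id)
      (c := (mul' R R ∘ₗ map (Coalgebra.counit (R := R)) γ)
        ∘ₗ (TensorProduct.assoc R H H H).toLinearMap)
      (d := γ ∘ₗ (map LinearMap.id (mulH R H) ∘ₗ (TensorProduct.assoc R H H H).toLinearMap))
      (c' := (mul' R R ∘ₗ map (Coalgebra.counit (R := R)) γ')
        ∘ₗ (TensorProduct.assoc R H H H).toLinearMap)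
      (d' := (γ' ∘ₗ map LinearMap.id (mulH R H)) ∘ₗ (TensorProduct.assoc R H H H).toLinearMap)
      hcoc (hA'A.trans one3.symm) (hBtB.trans one3.symm) (hCC'.trans one3.symm)
      (hC'C.trans one3.symm) (hDDt.trans one3.symm)
  -- unitality of γ'
  have key1 : γ' ∘ₗ (TensorProduct.mk R H H).flip 1 = Coalgebra.counit (R := R) (A := H) := by
    have hpb := UT.cv_pullback (comul2 R H) (Coalgebra.comul (R := R) (A := H))
      ((TensorProduct.mk R H H).flip 1) (UT.hj1 R H) γ γ'
    have h2 : γ ∘ₗ (TensorProduct.mk R H H).flip 1 = Coalgebra.counit (R := R) (A := H) := by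
      ext h; simpa using hur h
    rw [hir', UT.εj1 R H, h2] at hpb
    have h3 := UT.cv_one_left (A := R) (Coalgebra.comul (R := R) (A := H))
      (Coalgebra.counit (R := R)) (UT.coH R H).counit_l (γ' ∘ₗ (TensorProduct.mk R H H).flip 1)
    rw [UT.etaR_comp] at h3
    exact h3.symm.trans hpb.symm
  have key0 : γ' ∘ₗ TensorProduct.mk R H H 1 = Coalgebra.counit (R := R) (A := H) := by
    have hpb := UT.cv_pullback (comul2 R H) (Coalgebra.comul (R := R) (A := H))
      (TensorProduct.mk R H H 1) (UT.hj0 R H) γ γ'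
    have h2 : γ ∘ₗ TensorProduct.mk R H H 1 = Coalgebra.counit (R := R) (A := H) := by
      ext h; simpa using hul h
    rw [hir', UT.εj0 R H, h2] at hpb
    have h3 := UT.cv_one_left (A := R) (Coalgebra.comul (R := R) (A := H))
      (Coalgebra.counit (R := R)) (UT.coH R H).counit_l (γ' ∘ₗ TensorProduct.mk R H H 1)
    rw [UT.etaR_comp] at h3
    exact h3.symm.trans hpb.symm
  -- part 2
  have p2 : twistMul R H (twistMul R H (mulH R H) γ γ') γ' γ = mulH R H := by
    rw [UT.tw_conv, UT.tw_conv]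
    have huv : UT.cv (comul2 R H) (Algebra.linearMap R H ∘ₗ γ) (Algebra.linearMap R H ∘ₗ γ')
        = (1 : H ⊗[R] H →ₗ[R] H) := by
      rw [UT.cv_eta, hir']; rfl
    have hvu : UT.cv (comul2 R H) (Algebra.linearMap R H ∘ₗ γ') (Algebra.linearMap R H ∘ₗ γ)
        = (1 : H ⊗[R] H →ₗ[R] H) := by
      rw [UT.cv_eta, hil']; rfl
    exact UT.muntw (u := Algebra.linearMap R H ∘ₗ γ) (v := Algebra.linearMap R H ∘ₗ γ')
      (m := mulH R H) huv hvu
  refine ⟨⟨main, hil, hir, ?_, ?_⟩, p2⟩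
  · intro h
    simpa using LinearMap.congr_fun key1 h
  · intro h
    simpa using LinearMap.congr_fun key0 h
end

section
/- Let H be a Hopf algebra, γ a 2-cocycle on H, and V, W right H-comodules. The map φ_{V,W}(v ⊗ w) = v₍₀₎ ⊗ w₍₀₎ γ̄(v₍₁₎ ⊗ w₍₁₎) intertwines the twisted diagonal coaction δ^γ(v⊗w) = v₍₀₎⊗w₍₀₎⊗v₍₁₎·_γ w₍₁₎ on the source with the ordinary diagonal coaction δ(v⊗w) = v₍₀₎⊗w₍₀₎⊗v₍₁₎w₍₁₎ on the target: (φ_{V,W}⊗id)∘δ^γ = δ∘φ_{V,W}. -/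
open TensorProduct LinearMap

/-- The map `φ(v ⊗ w) = v₍₀₎ ⊗ w₍₀₎ γ'(v₍₁₎ ⊗ w₍₁₎)` for right `H`-comodules `V`, `W`. -/
noncomputable def phiMap (R H : Type*) [CommRing R] [Ring H] [HopfAlgebra R H]
    (V W : Type*) [AddCommGroup V] [Module R V] [AddCommGroup W] [Module R W]
    (δV : V →ₗ[R] V ⊗[R] H) (δW : W →ₗ[R] W ⊗[R] H) (γ' : H ⊗[R] H →ₗ[R] R) :
    V ⊗[R] W →ₗ[R] V ⊗[R] W :=
  (TensorProduct.rid R (V ⊗[R] W)).toLinearMap ∘ₗ map LinearMap.id γ'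
    ∘ₗ (tensorTensorTensorComm R V H W H).toLinearMap ∘ₗ map δV δW

/-- `δ` is a coassociative counital right coaction. -/
def IsCoactionOn (R H : Type*) [CommRing R] [Ring H] [HopfAlgebra R H]
    {V : Type*} [AddCommGroup V] [Module R V] (δV : V →ₗ[R] V ⊗[R] H) : Prop :=
  ((TensorProduct.assoc R V H H).toLinearMap ∘ₗ map δV LinearMap.id ∘ₗ δV
      = map LinearMap.id (Coalgebra.comul (R := R)) ∘ₗ δV) ∧
  ((TensorProduct.rid R V).toLinearMap ∘ₗ map LinearMap.id (Coalgebra.counit (R := R)) ∘ₗ δV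
      = LinearMap.id)

/-- The diagonal coaction on `V ⊗ W`, with the `H`-legs combined by a product `μ`. -/
noncomputable def coactDiag (R H : Type*) [CommRing R] [Ring H] [HopfAlgebra R H]
    (V W : Type*) [AddCommGroup V] [Module R V] [AddCommGroup W] [Module R W]
    (δV : V →ₗ[R] V ⊗[R] H) (δW : W →ₗ[R] W ⊗[R] H) (μ : H ⊗[R] H →ₗ[R] H) :
    V ⊗[R] W →ₗ[R] (V ⊗[R] W) ⊗[R] H :=
  map LinearMap.id μ ∘ₗ (tensorTensorTensorComm R V H W H).toLinearMap ∘ₗ map δV δW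


noncomputable section Aux
open TensorProduct LinearMap Coalgebra

variable {R : Type*} [CommRing R]

theorem natTTT {M₁ M₂ M₃ M₄ N₁ N₂ N₃ N₄ : Type*}
    [AddCommGroup M₁] [AddCommGroup M₂] [AddCommGroup M₃] [AddCommGroup M₄]
    [AddCommGroup N₁] [AddCommGroup N₂] [AddCommGroup N₃] [AddCommGroup N₄]
    [Module R M₁] [Module R M₂] [Module R M₃] [Module R M₄]
    [Module R N₁] [Module R N₂] [Module R N₃] [Module R N₄]
    (a : M₁ →ₗ[R] N₁) (b : M₂ →ₗ[R] N₂) (c : M₃ →ₗ[R] N₃) (d : M₄ →ₗ[R] N₄) :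
    (tensorTensorTensorComm R N₁ N₂ N₃ N₄).toLinearMap ∘ₗ map (map a b) (map c d)
      = map (map a c) (map b d) ∘ₗ (tensorTensorTensorComm R M₁ M₂ M₃ M₄).toLinearMap := by
  ext m₁ m₂ m₃ m₄
  simp

variable {H : Type*} [Ring H] [HopfAlgebra R H]

/-- coassociativity of `comul` in convenient form -/
theorem Hcoassoc' :
    map (Coalgebra.comul (R := R) (A := H)) LinearMap.id ∘ₗ Coalgebra.comul
      = (TensorProduct.assoc R H H H).symm.toLinearMap
          ∘ₗ map LinearMap.id Coalgebra.comul ∘ₗ Coalgebra.comul := by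
  rw [eq_comm, LinearEquiv.toLinearMap_symm_comp_eq]
  exact (Coalgebra.coassoc (R := R) (A := H)).symm


/-- splitting lemmas -/
theorem map_split_l {M N P Q S : Type*} [AddCommGroup M] [AddCommGroup N] [AddCommGroup P]
    [AddCommGroup Q] [AddCommGroup S] [Module R M] [Module R N] [Module R P] [Module R Q]
    [Module R S] (f₂ : N →ₗ[R] P) (f₁ : M →ₗ[R] N) (g : Q →ₗ[R] S) :
    map (f₂ ∘ₗ f₁) g = map f₂ g ∘ₗ map f₁ LinearMap.id := by
  rw [← TensorProduct.map_comp, LinearMap.comp_id]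

theorem map_split_l' {M N P Q S : Type*} [AddCommGroup M] [AddCommGroup N] [AddCommGroup P]
    [AddCommGroup Q] [AddCommGroup S] [Module R M] [Module R N] [Module R P] [Module R Q]
    [Module R S] (f₂ : N →ₗ[R] P) (f₁ : M →ₗ[R] N) (g : Q →ₗ[R] S) :
    map (f₂ ∘ₗ f₁) g = map f₂ LinearMap.id ∘ₗ map f₁ g := by
  rw [← TensorProduct.map_comp, LinearMap.id_comp]

theorem map_split_r {M N P Q S : Type*} [AddCommGroup M] [AddCommGroup N] [AddCommGroup P]
    [AddCommGroup Q] [AddCommGroup S] [Module R M] [Module R N] [Module R P] [Module R Q]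
    [Module R S] (f : M →ₗ[R] N) (g₂ : Q →ₗ[R] S) (g₁ : P →ₗ[R] Q) :
    map f (g₂ ∘ₗ g₁) = map f g₂ ∘ₗ map LinearMap.id g₁ := by
  rw [← TensorProduct.map_comp, LinearMap.comp_id]

theorem map_split_r' {M N P Q S : Type*} [AddCommGroup M] [AddCommGroup N] [AddCommGroup P]
    [AddCommGroup Q] [AddCommGroup S] [Module R M] [Module R N] [Module R P] [Module R Q]
    [Module R S] (f : M →ₗ[R] N) (g₂ : Q →ₗ[R] S) (g₁ : P →ₗ[R] Q) :
    map f (g₂ ∘ₗ g₁) = map LinearMap.id g₂ ∘ₗ map f g₁ := by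
  rw [← TensorProduct.map_comp, LinearMap.id_comp]

variable (R)
variable (H : Type*) [Ring H] [HopfAlgebra R H]

/-- coassociativity of `comul2` -/
theorem coassoc2' :
    (TensorProduct.assoc R (H ⊗[R] H) (H ⊗[R] H) (H ⊗[R] H)).toLinearMap
        ∘ₗ map (comul2 R H) LinearMap.id ∘ₗ comul2 R H
      = map LinearMap.id (comul2 R H) ∘ₗ comul2 R H := by
  set Δ := (Coalgebra.comul (R := R) (A := H)) with hΔ
  set τ := (tensorTensorTensorComm R H H H H).toLinearMap with hτ
  set τ₂ := (tensorTensorTensorComm R (H ⊗[R] H) H (H ⊗[R] H) H).toLinearMap with hτ₂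
  set τ₃ := (tensorTensorTensorComm R H (H ⊗[R] H) H (H ⊗[R] H)).toLinearMap with hτ₃
  set αH := (TensorProduct.assoc R H H H).toLinearMap with hαH
  set D := map Δ Δ with hD
  have hc2 : comul2 R H = τ ∘ₗ D := rfl
  -- naturality instances
  have n1 : map D (LinearMap.id (M := H ⊗[R] H)) ∘ₗ τ
      = τ₂ ∘ₗ map (map Δ LinearMap.id) (map Δ LinearMap.id) := by
    ext h h' k k'; simp [hD, hτ, hτ₂]
  have n2 : map (LinearMap.id (M := H ⊗[R] H)) D ∘ₗ τ
      = τ₃ ∘ₗ map (map LinearMap.id Δ) (map LinearMap.id Δ) := by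
    ext h h' k k'; simp [hD, hτ, hτ₃]
  -- H-coassociativity
  have hco : map LinearMap.id Δ ∘ₗ Δ = αH ∘ₗ map Δ LinearMap.id ∘ₗ Δ :=
    (Coalgebra.coassoc (R := R) (A := H)).symm
  -- structural identity
  have s1 : (TensorProduct.assoc R (H ⊗[R] H) (H ⊗[R] H) (H ⊗[R] H)).toLinearMap
        ∘ₗ map τ LinearMap.id ∘ₗ τ₂
      = map LinearMap.id τ ∘ₗ τ₃ ∘ₗ map αH αH := by
    ext h h' h'' k k' k''; simp [hτ, hτ₂, hτ₃, hαH]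
  refine LinearMap.ext fun x => ?_
  have e1 : comul2 R H x = τ (D x) := rfl
  simp only [LinearMap.comp_apply, e1]
  calc (TensorProduct.assoc R (H ⊗[R] H) (H ⊗[R] H) (H ⊗[R] H)).toLinearMap
        (map (comul2 R H) LinearMap.id (τ (D x)))
      = (TensorProduct.assoc R (H ⊗[R] H) (H ⊗[R] H) (H ⊗[R] H)).toLinearMap
        (map τ LinearMap.id (map D LinearMap.id (τ (D x)))) := by
        rw [hc2, map_split_l]; rfl
    _ = (TensorProduct.assoc R (H ⊗[R] H) (H ⊗[R] H) (H ⊗[R] H)).toLinearMap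
        (map τ LinearMap.id (τ₂ (map (map Δ LinearMap.id) (map Δ LinearMap.id) (D x)))) := by
        rw [← LinearMap.comp_apply (map D LinearMap.id) τ, n1]; rfl
    _ = (TensorProduct.assoc R (H ⊗[R] H) (H ⊗[R] H) (H ⊗[R] H)).toLinearMap
        (map τ LinearMap.id (τ₂ (map (map Δ LinearMap.id ∘ₗ Δ) (map Δ LinearMap.id ∘ₗ Δ) x))) := by
        rw [TensorProduct.map_comp]; rfl
    _ = map LinearMap.id τ (τ₃ (map αH αH (map (map Δ LinearMap.id ∘ₗ Δ) (map Δ LinearMap.id ∘ₗ Δ) x))) := by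
        exact LinearMap.congr_fun s1 _
    _ = map LinearMap.id τ (τ₃ (map (map LinearMap.id Δ ∘ₗ Δ) (map LinearMap.id Δ ∘ₗ Δ) x)) := by
        conv_rhs => rw [hco, TensorProduct.map_comp, TensorProduct.map_comp]
        conv_lhs => rw [TensorProduct.map_comp]
        rfl
    _ = map LinearMap.id τ (map (LinearMap.id (M := H ⊗[R] H)) D (τ (D x))) := by
        conv_rhs => rw [← LinearMap.comp_apply (map LinearMap.id D) τ, n2]
        rw [TensorProduct.map_comp]; rfl
    _ = map LinearMap.id (comul2 R H) (τ (D x)) := by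
        rw [hc2, map_split_r]; rfl

/-- left counit law for `comul2` -/
theorem counitL2 :
    (TensorProduct.lid R (H ⊗[R] H)).toLinearMap
        ∘ₗ map (counit2 R H) LinearMap.id ∘ₗ comul2 R H = LinearMap.id := by
  set Δ := (Coalgebra.comul (R := R) (A := H)) with hΔ
  set ε := (Coalgebra.counit (R := R) (A := H)) with hε
  set τ := (tensorTensorTensorComm R H H H H).toLinearMap with hτ
  set τR := (tensorTensorTensorComm R R H R H).toLinearMap with hτR
  have n1 : map (map ε ε) (LinearMap.id (M := H ⊗[R] H)) ∘ₗ τ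
      = τR ∘ₗ map (map ε LinearMap.id) (map ε LinearMap.id) := by
    ext h h' k k'; simp [hτ, hτR]
  have hcu : map ε LinearMap.id ∘ₗ Δ = TensorProduct.mk R R H 1 :=
    Coalgebra.rTensor_counit_comp_comul (R := R) (A := H)
  have s2 : (TensorProduct.lid R (H ⊗[R] H)).toLinearMap
        ∘ₗ map ((TensorProduct.lid R R).toLinearMap) LinearMap.id ∘ₗ τR
        ∘ₗ map (TensorProduct.mk R R H 1) (TensorProduct.mk R R H 1) = LinearMap.id := by
    ext h k; simp [hτR]
  refine LinearMap.ext fun x => ?_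
  have e1 : comul2 R H x = τ (map Δ Δ x) := rfl
  simp only [LinearMap.comp_apply, LinearMap.id_apply, e1]
  calc (TensorProduct.lid R (H ⊗[R] H)).toLinearMap (map (counit2 R H) LinearMap.id (τ (map Δ Δ x)))
      = (TensorProduct.lid R (H ⊗[R] H)).toLinearMap
          (map ((TensorProduct.lid R R).toLinearMap) LinearMap.id
            (map (map ε ε) LinearMap.id (τ (map Δ Δ x)))) := by
        rw [show counit2 R H = (TensorProduct.lid R R).toLinearMap ∘ₗ map ε ε from rfl,
          map_split_l]; rfl
    _ = (TensorProduct.lid R (H ⊗[R] H)).toLinearMap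
          (map ((TensorProduct.lid R R).toLinearMap) LinearMap.id
            (τR (map (map ε LinearMap.id ∘ₗ Δ) (map ε LinearMap.id ∘ₗ Δ) x))) := by
        conv_lhs => rw [← LinearMap.comp_apply (map (map ε ε) LinearMap.id) τ, n1]
        rw [TensorProduct.map_comp]; rfl
    _ = x := by
        rw [hcu]
        exact LinearMap.congr_fun s2 x

theorem map_split_m {M N P Q : Type*} [AddCommGroup M] [AddCommGroup N] [AddCommGroup P]
    [AddCommGroup Q] [Module R M] [Module R N] [Module R P] [Module R Q]
    (f : M →ₗ[R] N) (g : P →ₗ[R] Q) :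
    map f g = map LinearMap.id g ∘ₗ map f LinearMap.id := by
  rw [← TensorProduct.map_comp, LinearMap.id_comp, LinearMap.comp_id]

theorem map_split_m' {M N P Q : Type*} [AddCommGroup M] [AddCommGroup N] [AddCommGroup P]
    [AddCommGroup Q] [Module R M] [Module R N] [Module R P] [Module R Q]
    (f : M →ₗ[R] N) (g : P →ₗ[R] Q) :
    map f g = map f LinearMap.id ∘ₗ map LinearMap.id g := by
  rw [← TensorProduct.map_comp, LinearMap.id_comp, LinearMap.comp_id]

/-- left convolution action of a functional on a map `H ⊗ H → H` -/
def TT (f : H ⊗[R] H →ₗ[R] R) (g : H ⊗[R] H →ₗ[R] H) : H ⊗[R] H →ₗ[R] H :=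
  (TensorProduct.lid R H).toLinearMap ∘ₗ map f g ∘ₗ comul2 R H

/-- right convolution action of a functional on a map `H ⊗ H → H` -/
def TR (g : H ⊗[R] H →ₗ[R] H) (f : H ⊗[R] H →ₗ[R] R) : H ⊗[R] H →ₗ[R] H :=
  (TensorProduct.rid R H).toLinearMap ∘ₗ map g f ∘ₗ comul2 R H

theorem TT_TR (f h : H ⊗[R] H →ₗ[R] R) (g : H ⊗[R] H →ₗ[R] H) :
    TT R H f (TR R H g h) = TR R H (TT R H f g) h := by
  set αC := (TensorProduct.assoc R (H ⊗[R] H) (H ⊗[R] H) (H ⊗[R] H)).toLinearMap with hαC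
  have d1 : map f (TR R H g h)
      = map LinearMap.id (TensorProduct.rid R H).toLinearMap
          ∘ₗ map LinearMap.id (map g h) ∘ₗ map f (comul2 R H) := by
    rw [show TR R H g h = (TensorProduct.rid R H).toLinearMap ∘ₗ map g h ∘ₗ comul2 R H from rfl,
      map_split_r', map_split_r']
  have d2 : map f (comul2 R H) = map f LinearMap.id ∘ₗ map LinearMap.id (comul2 R H) := by
    rw [← TensorProduct.map_comp, LinearMap.id_comp, LinearMap.comp_id]
  have d3 : map (TT R H f g) h
      = map (TensorProduct.lid R H).toLinearMap LinearMap.id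
          ∘ₗ map (map f g) LinearMap.id ∘ₗ map (comul2 R H) h := by
    rw [show TT R H f g = (TensorProduct.lid R H).toLinearMap ∘ₗ map f g ∘ₗ comul2 R H from rfl,
      map_split_l', map_split_l']
  have d4 : map (comul2 R H) h = map LinearMap.id h ∘ₗ map (comul2 R H) LinearMap.id := by
    rw [← TensorProduct.map_comp, LinearMap.id_comp, LinearMap.comp_id]
  have s3 : (TensorProduct.lid R H).toLinearMap
        ∘ₗ map LinearMap.id (TensorProduct.rid R H).toLinearMap
        ∘ₗ map LinearMap.id (map g h) ∘ₗ map f LinearMap.id ∘ₗ αC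
      = (TensorProduct.rid R H).toLinearMap
        ∘ₗ map (TensorProduct.lid R H).toLinearMap LinearMap.id
        ∘ₗ map (map f g) LinearMap.id ∘ₗ map LinearMap.id h := by
    ext c c' c''
    simp [hαC, smul_smul, mul_comm]
  refine LinearMap.ext fun x => ?_
  have hu : map LinearMap.id (comul2 R H) ((comul2 R H) x)
      = αC (map (comul2 R H) LinearMap.id ((comul2 R H) x)) :=
    (LinearMap.congr_fun (coassoc2' R H) x).symm
  show (TensorProduct.lid R H).toLinearMap (map f (TR R H g h) ((comul2 R H) x))
      = (TensorProduct.rid R H).toLinearMap (map (TT R H f g) h ((comul2 R H) x))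
  rw [d1, d3]
  simp only [LinearMap.comp_apply]
  rw [d2, d4]
  simp only [LinearMap.comp_apply]
  rw [hu]
  exact LinearMap.congr_fun s3 (map (comul2 R H) LinearMap.id ((comul2 R H) x))

theorem TT_TT (f g : H ⊗[R] H →ₗ[R] R) (m : H ⊗[R] H →ₗ[R] H) :
    TT R H f (TT R H g m) = TT R H (convOn R (comul2 R H) f g) m := by
  set αC := (TensorProduct.assoc R (H ⊗[R] H) (H ⊗[R] H) (H ⊗[R] H)).toLinearMap with hαC
  have d1 : map f (TT R H g m)
      = map LinearMap.id (TensorProduct.lid R H).toLinearMap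
          ∘ₗ map LinearMap.id (map g m) ∘ₗ map f (comul2 R H) := by
    rw [show TT R H g m = (TensorProduct.lid R H).toLinearMap ∘ₗ map g m ∘ₗ comul2 R H from rfl,
      map_split_r', map_split_r']
  have d2 : map f (comul2 R H) = map f LinearMap.id ∘ₗ map LinearMap.id (comul2 R H) := by
    rw [← TensorProduct.map_comp, LinearMap.id_comp, LinearMap.comp_id]
  have d3 : map (convOn R (comul2 R H) f g) m
      = map (LinearMap.mul' R R) LinearMap.id
          ∘ₗ map (map f g) LinearMap.id ∘ₗ map (comul2 R H) m := by
    rw [show convOn R (comul2 R H) f g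
        = LinearMap.mul' R R ∘ₗ map f g ∘ₗ comul2 R H from rfl,
      map_split_l', map_split_l']
  have d4 : map (comul2 R H) m = map LinearMap.id m ∘ₗ map (comul2 R H) LinearMap.id := by
    rw [← TensorProduct.map_comp, LinearMap.id_comp, LinearMap.comp_id]
  have s4 : (TensorProduct.lid R H).toLinearMap
        ∘ₗ map LinearMap.id (TensorProduct.lid R H).toLinearMap
        ∘ₗ map LinearMap.id (map g m) ∘ₗ map f LinearMap.id ∘ₗ αC
      = (TensorProduct.lid R H).toLinearMap
        ∘ₗ map (LinearMap.mul' R R) LinearMap.id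
        ∘ₗ map (map f g) LinearMap.id ∘ₗ map LinearMap.id m := by
    ext c c' c''
    simp [hαC, smul_smul, mul_comm]
  refine LinearMap.ext fun x => ?_
  have hu : map LinearMap.id (comul2 R H) ((comul2 R H) x)
      = αC (map (comul2 R H) LinearMap.id ((comul2 R H) x)) :=
    (LinearMap.congr_fun (coassoc2' R H) x).symm
  show (TensorProduct.lid R H).toLinearMap (map f (TT R H g m) ((comul2 R H) x))
      = (TensorProduct.lid R H).toLinearMap (map (convOn R (comul2 R H) f g) m ((comul2 R H) x))
  rw [d1, d3]
  simp only [LinearMap.comp_apply]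
  rw [d2, d4]
  simp only [LinearMap.comp_apply]
  rw [hu]
  exact LinearMap.congr_fun s4 (map (comul2 R H) LinearMap.id ((comul2 R H) x))

theorem TT_counit (m : H ⊗[R] H →ₗ[R] H) : TT R H (counit2 R H) m = m := by
  have d1 : map (counit2 R H) m
      = map LinearMap.id m ∘ₗ map (counit2 R H) LinearMap.id := by
    rw [← TensorProduct.map_comp, LinearMap.id_comp, LinearMap.comp_id]
  have s5 : (TensorProduct.lid R H).toLinearMap ∘ₗ map LinearMap.id m
      = m ∘ₗ (TensorProduct.lid R (H ⊗[R] H)).toLinearMap := by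
    ext r c; simp
  refine LinearMap.ext fun x => ?_
  show (TensorProduct.lid R H).toLinearMap (map (counit2 R H) m ((comul2 R H) x)) = m x
  rw [d1]
  simp only [LinearMap.comp_apply]
  rw [← LinearMap.comp_apply (TensorProduct.lid R H).toLinearMap, s5]
  simp only [LinearMap.comp_apply]
  exact congrArg m (LinearMap.congr_fun (counitL2 R H) x)

theorem tw_eq (μ : H ⊗[R] H →ₗ[R] H) (γ γ' : H ⊗[R] H →ₗ[R] R) :
    twistMul R H μ γ γ' = TR R H (TT R H γ μ) γ' := by
  have d1 : map (TT R H γ μ) γ'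
      = map (TensorProduct.lid R H).toLinearMap LinearMap.id
          ∘ₗ map (map γ μ) LinearMap.id ∘ₗ map (comul2 R H) γ' := by
    rw [show TT R H γ μ = (TensorProduct.lid R H).toLinearMap ∘ₗ map γ μ ∘ₗ comul2 R H from rfl,
      map_split_l', map_split_l']
  have d2 : map (comul2 R H) γ' = map LinearMap.id γ' ∘ₗ map (comul2 R H) LinearMap.id := by
    rw [← TensorProduct.map_comp, LinearMap.id_comp, LinearMap.comp_id]
  have d3 : map (map γ μ) LinearMap.id ∘ₗ map LinearMap.id γ' = map (map γ μ) γ' := by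
    rw [← TensorProduct.map_comp, LinearMap.id_comp, LinearMap.comp_id]
  have s6 : (TensorProduct.lid R H).toLinearMap
        ∘ₗ (TensorProduct.rid R (R ⊗[R] H)).toLinearMap
      = (TensorProduct.rid R H).toLinearMap
        ∘ₗ map (TensorProduct.lid R H).toLinearMap LinearMap.id := by
    ext; simp [smul_smul, mul_comm]
  refine LinearMap.ext fun x => ?_
  show (TensorProduct.lid R H).toLinearMap ((TensorProduct.rid R (R ⊗[R] H)).toLinearMap
      (map (map γ μ) γ' (map (comul2 R H) LinearMap.id ((comul2 R H) x))))
    = (TensorProduct.rid R H).toLinearMap (map (TT R H γ μ) γ' ((comul2 R H) x))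
  rw [d1]
  simp only [LinearMap.comp_apply]
  rw [d2]
  simp only [LinearMap.comp_apply]
  rw [← LinearMap.comp_apply (map (map γ μ) LinearMap.id), d3,
    ← LinearMap.comp_apply (TensorProduct.lid R H).toLinearMap, s6]
  simp only [LinearMap.comp_apply]

theorem TT_tw (μ : H ⊗[R] H →ₗ[R] H) (γ γ' : H ⊗[R] H →ₗ[R] R)
    (hinv : convOn R (comul2 R H) γ' γ = counit2 R H) :
    TT R H γ' (twistMul R H μ γ γ') = TR R H μ γ' := by
  rw [tw_eq, TT_TR, TT_TT, hinv, TT_counit]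
end Aux
set_option maxHeartbeats 2000000 in
/-- `φ` intertwines the twisted diagonal coaction
`v⊗w ↦ v₍₀₎⊗w₍₀₎⊗v₍₁₎·_γ w₍₁₎` with the ordinary diagonal coaction:
`(φ ⊗ id) ∘ δ^γ = δ ∘ φ`. -/
theorem phiMap_intertwines (R H : Type*) [CommRing R] [Ring H] [HopfAlgebra R H]
    (V W : Type*) [AddCommGroup V] [Module R V] [AddCommGroup W] [Module R W]
    (δV : V →ₗ[R] V ⊗[R] H) (δW : W →ₗ[R] W ⊗[R] H)
    (hV : IsCoactionOn R H δV) (hW : IsCoactionOn R H δW)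
    (γ γ' : H ⊗[R] H →ₗ[R] R) (hco : IsCocycle R H (mulH R H) γ γ') :
    map (phiMap R H V W δV δW γ') LinearMap.id
        ∘ₗ coactDiag R H V W δV δW (twistMul R H (mulH R H) γ γ')
      = coactDiag R H V W δV δW (mulH R H) ∘ₗ phiMap R H V W δV δW γ' := by
  set Δ := (Coalgebra.comul (R := R) (A := H)) with hΔ
  set tw := twistMul R H (mulH R H) γ γ' with htw
  set τ := (tensorTensorTensorComm R H H H H).toLinearMap with hτ
  set ttt := (tensorTensorTensorComm R V H W H).toLinearMap with httt
  set ttt₂ := (tensorTensorTensorComm R (V ⊗[R] H) H (W ⊗[R] H) H).toLinearMap with httt₂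
  set ttt' := (tensorTensorTensorComm R V (H ⊗[R] H) W (H ⊗[R] H)).toLinearMap with httt'
  set αV := (TensorProduct.assoc R V H H) with hαV
  set αW := (TensorProduct.assoc R W H H) with hαW
  set φ₀ := (TensorProduct.rid R (V ⊗[R] W)).toLinearMap ∘ₗ map LinearMap.id γ' ∘ₗ ttt with hφ₀
  set Θ₁ := (TensorProduct.lid R H).toLinearMap ∘ₗ map γ' tw ∘ₗ τ with hΘ₁
  set Θ₂ := (TensorProduct.rid R H).toLinearMap ∘ₗ map (mulH R H) γ' ∘ₗ τ with hΘ₂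
  -- coaction coassociativity in symm form
  have fV : map δV LinearMap.id ∘ₗ δV = αV.symm.toLinearMap ∘ₗ map LinearMap.id Δ ∘ₗ δV := by
    rw [eq_comm, LinearEquiv.toLinearMap_symm_comp_eq]; exact hV.1.symm
  have fW : map δW LinearMap.id ∘ₗ δW = αW.symm.toLinearMap ∘ₗ map LinearMap.id Δ ∘ₗ δW := by
    rw [eq_comm, LinearEquiv.toLinearMap_symm_comp_eq]; exact hW.1.symm
  -- splitting the LHS outer map
  have dL1 : map (phiMap R H V W δV δW γ') LinearMap.id ∘ₗ map LinearMap.id tw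
      = map φ₀ tw ∘ₗ map (map δV δW) LinearMap.id := by
    rw [← TensorProduct.map_comp, LinearMap.comp_id, LinearMap.id_comp,
      show phiMap R H V W δV δW γ' = φ₀ ∘ₗ map δV δW from rfl, map_split_l]
  -- naturality instances
  have nA : map (map δV δW) (LinearMap.id (M := H ⊗[R] H)) ∘ₗ ttt
      = ttt₂ ∘ₗ map (map δV LinearMap.id) (map δW LinearMap.id) := by
    ext v h w k; simp [httt, httt₂]
  have nB : map δV δW ∘ₗ (TensorProduct.rid R (V ⊗[R] W)).toLinearMap
        ∘ₗ map LinearMap.id γ' ∘ₗ ttt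
      = (TensorProduct.rid R ((V ⊗[R] H) ⊗[R] (W ⊗[R] H))).toLinearMap
        ∘ₗ map LinearMap.id γ' ∘ₗ ttt₂ ∘ₗ map (map δV LinearMap.id) (map δW LinearMap.id) := by
    ext v h w k; simp [httt, httt₂]
  have nC : ttt' ∘ₗ map (map LinearMap.id Δ) (map LinearMap.id Δ)
      = map LinearMap.id (map Δ Δ) ∘ₗ ttt := by
    ext v h w k; simp [httt, httt']
  -- structural reductions
  have claimA : map φ₀ tw ∘ₗ ttt₂ ∘ₗ map αV.symm.toLinearMap αW.symm.toLinearMap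
      = map LinearMap.id Θ₁ ∘ₗ ttt' := by
    ext v h h' w k k'
    simp [hφ₀, hΘ₁, httt, httt₂, httt', hτ, hαV, hαW, TensorProduct.smul_tmul]
  have claimB : map LinearMap.id (mulH R H) ∘ₗ ttt
        ∘ₗ (TensorProduct.rid R ((V ⊗[R] H) ⊗[R] (W ⊗[R] H))).toLinearMap
        ∘ₗ map LinearMap.id γ' ∘ₗ ttt₂ ∘ₗ map αV.symm.toLinearMap αW.symm.toLinearMap
      = map LinearMap.id Θ₂ ∘ₗ ttt' := by
    ext v h h' w k k'
    simp [hΘ₂, httt, httt₂, httt', hτ, hαV, hαW, TensorProduct.smul_tmul]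
  -- merging lemma
  have dF : ∀ Θ : (H ⊗[R] H) ⊗[R] (H ⊗[R] H) →ₗ[R] H,
      map (LinearMap.id (M := V ⊗[R] W)) Θ ∘ₗ map LinearMap.id (map Δ Δ)
        = map LinearMap.id (Θ ∘ₗ map Δ Δ) := fun Θ => by
    rw [← TensorProduct.map_comp, LinearMap.comp_id]
  -- the key convolution identity
  have key : Θ₁ ∘ₗ map Δ Δ = Θ₂ ∘ₗ map Δ Δ := by
    have h1 : Θ₁ ∘ₗ map Δ Δ = TT R H γ' tw := rfl
    have h2 : Θ₂ ∘ₗ map Δ Δ = TR R H (mulH R H) γ' := rfl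
    rw [h1, h2, htw]
    exact TT_tw R H (mulH R H) γ γ' hco.conv_inv_left
  refine LinearMap.ext fun z => ?_
  show map (phiMap R H V W δV δW γ') LinearMap.id (map LinearMap.id tw (ttt (map δV δW z)))
      = map LinearMap.id (mulH R H) (ttt (map δV δW
          ((TensorProduct.rid R (V ⊗[R] W)).toLinearMap
            (map LinearMap.id γ' (ttt (map δV δW z))))))
  rw [← LinearMap.comp_apply (map (phiMap R H V W δV δW γ') LinearMap.id), dL1]
  simp only [LinearMap.comp_apply]
  rw [← LinearMap.comp_apply (map (map δV δW) LinearMap.id) ttt, nA]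
  conv_rhs => rw [← LinearMap.comp_apply (map δV δW),
    ← LinearMap.comp_apply _ (map LinearMap.id γ'),
    ← LinearMap.comp_apply _ ttt]
  conv_rhs => rw [← LinearMap.comp_apply _ ttt]
  conv_rhs => simp only [LinearMap.comp_assoc]
  conv_rhs => rw [nB]
  simp only [LinearMap.comp_apply]
  rw [← LinearMap.comp_apply (map (map δV LinearMap.id) (map δW LinearMap.id)) (map δV δW),
    ← TensorProduct.map_comp, fV, fW, TensorProduct.map_comp]
  simp only [LinearMap.comp_apply]
  rw [← LinearMap.comp_apply ttt₂ (map αV.symm.toLinearMap αW.symm.toLinearMap),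
    ← LinearMap.comp_apply (map φ₀ tw), claimA,
    ← LinearMap.comp_apply (map LinearMap.id (mulH R H)) ttt]
  conv_rhs => rw [← LinearMap.comp_apply (map LinearMap.id γ'),
    ← LinearMap.comp_apply (TensorProduct.rid R ((V ⊗[R] H) ⊗[R] (W ⊗[R] H))).toLinearMap,
    ← LinearMap.comp_apply (map LinearMap.id (mulH R H) ∘ₗ ttt)]
  conv_rhs => simp only [LinearMap.comp_assoc]
  conv_rhs => rw [claimB]
  simp only [LinearMap.comp_apply]
  rw [TensorProduct.map_comp]
  simp only [LinearMap.comp_apply]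
  rw [← LinearMap.comp_apply ttt' (map (map LinearMap.id Δ) (map LinearMap.id Δ)), nC]
  simp only [LinearMap.comp_apply]
  rw [← LinearMap.comp_apply (map LinearMap.id Θ₁), ← LinearMap.comp_apply (map LinearMap.id Θ₂),
    dF Θ₁, dF Θ₂, key]
end
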